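/- arXiv:2505.09520 — 4 statements merged into one kernel-verified Lean document; each statement's English description precedes it below -/
import Mathlib

section
/- Let e_k^κ denote the action of the full symmetrizer e_k = (1/k!)∑_{σ∈S_k} σ on ℂ[Y_1,...,Y_k] via the Demazure-type action σ_i ↦ P_{i,i+1} + κ(1−P_{i,i+1})/(Y_i−Y_{i+1}). Then for any polynomial f, (e_k^κ f)(Y_1,...,Y_k) = (1/k!) ∑_{σ∈S_k} ∏_{i<j} ((Y_{σ(i)} − Y_{σ(j)} + κ)/(Y_{σ(i)} − Y_{σ(j)})) · f(Y_{σ(1)},...,Y_{σ(k)}). -/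
/-!
Put `W_σ = ∏_{i<j} (Y_{σi} - Y_{σj} + κ) / (Y_{σi} - Y_{σj})` and `S f = ∑_σ W_σ · σ(f)`.
For an adjacent transposition `s = (a a+1)` the products `W_{σs}` and `W_σ` differ only in the
factor of the pair `(a, a+1)`, and this makes `S` absorb the Demazure operator: `S ∘ σ_a^κ = S`.
Hence `S (ρ σ f) = S f` for every `σ`, so `S E = k! · S f` for `E = ∑_σ ρ σ f`.
On the other hand `E` is fixed by every `σ_a^κ`, which forces `P_{a,a+1} E = E`; so `E` is
symmetric and `S E = (∑_σ W_σ) · E = k! · E`. The normalisation `∑_σ W_σ = k!` follows by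
induction on `k`, expanding along `σ 0`, from `∑_p ∏_{m ≠ p} (y_p - y_m + κ)/(y_p - y_m) = k`,
the Lagrange formula for the top coefficient of `∏_m (X - y_m + κ) - ∏_m (X - y_m)`.
-/

open MvPolynomial Finset

/-- The field of rational functions in the variables `Y 1, …, Y k` over `ℂ`. -/
abbrev RatField (k : ℕ) : Type := FractionRing (MvPolynomial (Fin k) ℂ)

/-- The variable `Y i`, viewed in the field of rational functions. -/
noncomputable def Yv {k : ℕ} (i : Fin k) : RatField k :=
  algebraMap (MvPolynomial (Fin k) ℂ) (RatField k) (X i)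

/-- The substitution `Y i ↦ Y (g i)` for a permutation `g`. -/
noncomputable def permMap {k : ℕ} (g : Equiv.Perm (Fin k)) :
    RatField k →+* RatField k :=
  IsFractionRing.lift
    (g := (algebraMap (MvPolynomial (Fin k) ℂ) (RatField k)).comp (rename g).toRingHom)
    (by
      exact (IsFractionRing.injective (MvPolynomial (Fin k) ℂ) (RatField k)).comp
        (rename_injective _ g.injective))

/-- The Demazure-type operator `σ^κ_{ab} f = P_{ab} f + κ (f - P_{ab} f)/(Y a - Y b)`. -/
noncomputable def Dem {k : ℕ} (κ : ℂ) (a b : Fin k) (f : RatField k) : RatField k :=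
  permMap (Equiv.swap a b) f +
    algebraMap (MvPolynomial (Fin k) ℂ) (RatField k) (C κ) *
      (f - permMap (Equiv.swap a b) f) / (Yv a - Yv b)

open Polynomial in
theorem sum_prod_erase_sub_add_div_sub {F ι : Type*} [Field F] [Fintype ι] [DecidableEq ι]
    (κ : F) {y : ι → F} (hy : Function.Injective y) :
    ∑ i, ∏ j ∈ univ.erase i, (y i - y j + κ) / (y i - y j) = Fintype.card ι := by
  have hsub : ∀ {i j}, j ∈ univ.erase i → y i - y j ≠ 0 := fun hj =>
    sub_ne_zero.mpr (hy.ne (ne_of_mem_erase hj).symm)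
  rcases eq_or_ne κ 0 with rfl | hκ
  · simp +contextual [div_self (hsub _)]
  rcases isEmpty_or_nonempty ι with hι | hι
  · simp
  -- `P` has degree `< card ι`, and its top coefficient and its values at the nodes give the claim.
  set P : F[X] := Lagrange.nodal univ (fun i => y i - κ) - Lagrange.nodal univ y
  have hdeg : P.degree < (#(univ : Finset ι) : WithBot ℕ) := by
    rw [← Lagrange.degree_nodal (v := fun i => y i - κ)]
    exact degree_sub_lt_left (by rw [Lagrange.degree_nodal, Lagrange.degree_nodal])
      Lagrange.nodal_ne_zero
      (by rw [Lagrange.nodal_monic.leadingCoeff, Lagrange.nodal_monic.leadingCoeff])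
  have hcoeff : P.coeff (#(univ : Finset ι) - 1) = κ * Fintype.card ι := by
    rw [Polynomial.coeff_sub, Lagrange.nodal, Lagrange.nodal,
      prod_X_sub_C_coeff_card_pred _ _ univ_nonempty.card_pos,
      prod_X_sub_C_coeff_card_pred _ _ univ_nonempty.card_pos]
    simp only [sum_sub_distrib, sum_const, card_univ, nsmul_eq_mul]
    ring
  have heval : ∀ i, P.eval (y i) = κ * ∏ j ∈ univ.erase i, (y i - y j + κ) := by
    intro i
    simp only [P, Polynomial.eval_sub, Lagrange.eval_nodal,
      Lagrange.eval_nodal_at_node (mem_univ i), sub_zero, ← mul_prod_erase univ _ (mem_univ i)]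
    ring_nf
  have := Lagrange.coeff_eq_sum (s := univ) hy.injOn hdeg
  simp only [hcoeff, heval, mul_div_assoc, ← mul_sum, ← prod_div_distrib] at this
  exact mul_left_cancel₀ hκ this.symm

section PairProducts

variable {M : Type*} [CommMonoid M] {k : ℕ}

theorem prod_filter_lt_eq_prod_Ioi (t : Fin k → Fin k → M) :
    ∏ q ∈ univ.filter (fun q : Fin k × Fin k => q.1 < q.2), t q.1 q.2 =
      ∏ i, ∏ j ∈ Ioi i, t i j := by
  rw [prod_filter, Fintype.prod_prod_type]
  refine prod_congr rfl fun i _ => ?_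
  rw [← prod_filter]
  congr 1
  ext j; simp

theorem prod_filter_lt_fin_succ (t : Fin (k + 1) → Fin (k + 1) → M) :
    ∏ q ∈ univ.filter (fun q : Fin (k + 1) × Fin (k + 1) => q.1 < q.2), t q.1 q.2 =
      (∏ j : Fin k, t 0 j.succ) *
        ∏ q ∈ univ.filter (fun q : Fin k × Fin k => q.1 < q.2), t q.1.succ q.2.succ := by
  rw [prod_filter_lt_eq_prod_Ioi, prod_filter_lt_eq_prod_Ioi fun i j => t i.succ j.succ]
  simp only [Fin.prod_univ_succ, Fin.Ioi_zero_eq_map, ← Fin.map_succEmb_Ioi, prod_map,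
    Fin.coe_succEmb]

theorem swap_mem_erase_filter_lt {a b : Fin k} (hab : (a : ℕ) + 1 = b) {q : Fin k × Fin k}
    (hq : q ∈ (univ.filter fun q : Fin k × Fin k => q.1 < q.2).erase (a, b)) :
    (Equiv.swap a b q.1, Equiv.swap a b q.2) ∈
      (univ.filter fun q : Fin k × Fin k => q.1 < q.2).erase (a, b) := by
  obtain ⟨i, j⟩ := q
  simp only [mem_erase, mem_filter, mem_univ, true_and, Ne, Prod.mk.injEq, Fin.ext_iff,
    Fin.lt_def, Equiv.swap_apply_def] at hq ⊢
  split_ifs <;> simp_all <;> omega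

theorem prod_filter_lt_swap_mul (t : Fin k → Fin k → M) {a b : Fin k} (hab : (a : ℕ) + 1 = b) :
    (∏ q ∈ univ.filter (fun q : Fin k × Fin k => q.1 < q.2),
        t (Equiv.swap a b q.1) (Equiv.swap a b q.2)) * t a b =
      t b a * ∏ q ∈ univ.filter (fun q : Fin k × Fin k => q.1 < q.2), t q.1 q.2 := by
  set P := univ.filter fun q : Fin k × Fin k => q.1 < q.2
  have hmem : (a, b) ∈ P := by simp only [P, mem_filter, mem_univ, true_and, Fin.lt_def]; omega
  have hrest : ∏ q ∈ P.erase (a, b), t (Equiv.swap a b q.1) (Equiv.swap a b q.2) =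
      ∏ q ∈ P.erase (a, b), t q.1 q.2 :=
    prod_nbij' (fun q => (Equiv.swap a b q.1, Equiv.swap a b q.2))
      (fun q => (Equiv.swap a b q.1, Equiv.swap a b q.2))
      (fun _ => swap_mem_erase_filter_lt hab) (fun _ => swap_mem_erase_filter_lt hab)
      (by simp) (by simp) (fun _ _ => rfl)
  rw [← mul_prod_erase P _ hmem, ← mul_prod_erase P _ hmem, hrest, Equiv.swap_apply_left,
    Equiv.swap_apply_right]
  dsimp only
  ac_rfl

theorem prod_swap_zero_succ_eq_prod_erase (p : Fin (k + 1)) (g : Fin (k + 1) → M) :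
    ∏ j : Fin k, g (Equiv.swap 0 p j.succ) = ∏ m ∈ univ.erase p, g m := by
  have : univ.erase p = (Ioi 0).map (Equiv.swap (0 : Fin (k + 1)) p).toEmbedding := by
    ext m
    rw [mem_map_equiv, Equiv.symm_swap, mem_Ioi, Fin.pos_iff_ne_zero, mem_erase, Ne, Ne,
      Equiv.swap_apply_eq_iff, Equiv.swap_apply_left]
    simp
  rw [this, prod_map, Fin.prod_Ioi_zero]
  rfl

end PairProducts

section SymmetrizerWeight

variable {F : Type*} [Field F]

def symmetrizerWeight {k : ℕ} (κ : F) (z : Fin k → F) : F :=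
  ∏ q ∈ univ.filter (fun q : Fin k × Fin k => q.1 < q.2), (z q.1 - z q.2 + κ) / (z q.1 - z q.2)

theorem symmetrizerWeight_fin_succ {k : ℕ} (κ : F) (z : Fin (k + 1) → F) :
    symmetrizerWeight κ z =
      (∏ j : Fin k, (z 0 - z j.succ + κ) / (z 0 - z j.succ)) *
        symmetrizerWeight κ (fun j => z j.succ) :=
  prod_filter_lt_fin_succ fun i j => (z i - z j + κ) / (z i - z j)

theorem sum_symmetrizerWeight_comp_perm (κ : F) :
    ∀ {k : ℕ} {y : Fin k → F}, Function.Injective y →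
      ∑ σ : Equiv.Perm (Fin k), symmetrizerWeight κ (y ∘ σ) = k.factorial
  | 0, y, _ => by simp [symmetrizerWeight]
  | k + 1, y, hy => by
    rw [← Equiv.sum_comp Equiv.Perm.decomposeFin.symm, Fintype.sum_prod_type]
    have hfirst (p : Fin (k + 1)) (e : Equiv.Perm (Fin k)) :
        symmetrizerWeight κ (y ∘ Equiv.Perm.decomposeFin.symm (p, e)) =
          (∏ m ∈ univ.erase p, (y p - y m + κ) / (y p - y m)) *
            symmetrizerWeight κ ((fun j => y (Equiv.swap 0 p j.succ)) ∘ e) := by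
      rw [symmetrizerWeight_fin_succ, ← prod_swap_zero_succ_eq_prod_erase p]
      simp only [Function.comp_apply, Equiv.Perm.decomposeFin_symm_apply_zero,
        Equiv.Perm.decomposeFin_symm_apply_succ]
      congr 1
      exact Equiv.prod_comp e fun j : Fin k =>
        (y p - y (Equiv.swap 0 p j.succ) + κ) / (y p - y (Equiv.swap 0 p j.succ))
    have hrest (p : Fin (k + 1)) : Function.Injective fun j : Fin k => y (Equiv.swap 0 p j.succ) :=
      hy.comp ((Equiv.injective _).comp (Fin.succ_injective k))
    simp only [hfirst, ← mul_sum, sum_symmetrizerWeight_comp_perm κ (hrest _), ← sum_mul,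
      sum_prod_erase_sub_add_div_sub κ hy, Fintype.card_fin, Nat.factorial_succ]
    push_cast
    ring

theorem symmetrizerWeight_comp_swap {k : ℕ} (κ : F) {z : Fin k → F} {a b : Fin k}
    (hab : (a : ℕ) + 1 = b) (hz : z a ≠ z b) :
    symmetrizerWeight κ (z ∘ Equiv.swap a b) * (1 - κ / (z b - z a)) +
      symmetrizerWeight κ z * (κ / (z a - z b)) = symmetrizerWeight κ z := by
  have hswap : symmetrizerWeight κ (z ∘ Equiv.swap a b) * ((z a - z b + κ) / (z a - z b)) =
      (z b - z a + κ) / (z b - z a) * symmetrizerWeight κ z :=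
    prod_filter_lt_swap_mul (fun i j => (z i - z j + κ) / (z i - z j)) hab
  have hne : z a - z b ≠ 0 := sub_ne_zero.mpr hz
  have hne' : z b - z a ≠ 0 := sub_ne_zero.mpr hz.symm
  have h1 : 1 - κ / (z b - z a) = (z a - z b + κ) / (z a - z b) := by
    field_simp
    ring
  rw [h1, hswap]
  field_simp
  ring

end SymmetrizerWeight

theorem permMap_algebraMap {k : ℕ} (g : Equiv.Perm (Fin k)) (p : MvPolynomial (Fin k) ℂ) :
    permMap g (algebraMap (MvPolynomial (Fin k) ℂ) (RatField k) p) =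
      algebraMap (MvPolynomial (Fin k) ℂ) (RatField k) (rename g p) :=
  IsFractionRing.lift_algebraMap _ _

theorem permMap_algebraMap_C {k : ℕ} (g : Equiv.Perm (Fin k)) (c : ℂ) :
    permMap g (algebraMap (MvPolynomial (Fin k) ℂ) (RatField k) (C c)) =
      algebraMap (MvPolynomial (Fin k) ℂ) (RatField k) (C c) := by
  rw [permMap_algebraMap, rename_C]

theorem permMap_Yv {k : ℕ} (g : Equiv.Perm (Fin k)) (i : Fin k) :
    permMap g (Yv i) = Yv (g i) := by
  rw [Yv, permMap_algebraMap, rename_X, Yv]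

theorem permMap_one {k : ℕ} : permMap (1 : Equiv.Perm (Fin k)) = RingHom.id (RatField k) := by
  refine IsLocalization.ringHom_ext (nonZeroDivisors (MvPolynomial (Fin k) ℂ)) ?_
  ext <;> simp [permMap_algebraMap]

theorem permMap_mul {k : ℕ} (g h : Equiv.Perm (Fin k)) :
    permMap (g * h) = (permMap g).comp (permMap h) := by
  refine IsLocalization.ringHom_ext (nonZeroDivisors (MvPolynomial (Fin k) ℂ)) ?_
  ext <;> simp [permMap_algebraMap]

theorem Yv_sub_Yv_add_C_ne_zero {k : ℕ} {i j : Fin k} (hij : i ≠ j) (c : ℂ) :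
    Yv i - Yv j + algebraMap (MvPolynomial (Fin k) ℂ) (RatField k) (C c) ≠ 0 := by
  rw [Yv, Yv, ← map_sub, ← map_add, map_ne_zero_iff _ (IsFractionRing.injective _ _)]
  intro h
  have := congrArg (coeff (Finsupp.single i 1)) h
  simp [coeff_X, coeff_C, Finsupp.single_left_inj one_ne_zero, hij.symm,
    (Finsupp.single_ne_zero.mpr one_ne_zero).symm] at this

theorem Yv_injective {k : ℕ} : Function.Injective (Yv (k := k)) := fun i j h => by
  by_contra hij
  simpa [h] using Yv_sub_Yv_add_C_ne_zero hij 0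

theorem Dem_eq {k : ℕ} (κ : ℂ) (a b : Fin k) (f : RatField k) :
    Dem κ a b f =
      (1 - algebraMap (MvPolynomial (Fin k) ℂ) (RatField k) (C κ) / (Yv a - Yv b)) *
          permMap (Equiv.swap a b) f +
        algebraMap (MvPolynomial (Fin k) ℂ) (RatField k) (C κ) / (Yv a - Yv b) * f := by
  rw [Dem]
  ring

theorem Dem_sum {k : ℕ} (κ : ℂ) (a b : Fin k) {ι : Type*} (s : Finset ι)
    (g : ι → RatField k) : Dem κ a b (∑ i ∈ s, g i) = ∑ i ∈ s, Dem κ a b (g i) := by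
  simp only [Dem_eq, map_sum, mul_sum, sum_add_distrib]

theorem permMap_swap_eq_of_Dem_eq {k : ℕ} (κ : ℂ) {a b : Fin k} (hab : a ≠ b) {f : RatField k}
    (h : Dem κ a b f = f) : permMap (Equiv.swap a b) f = f := by
  set c := algebraMap (MvPolynomial (Fin k) ℂ) (RatField k) (C κ)
  have hne : Yv a - Yv b ≠ 0 := by simpa using Yv_sub_Yv_add_C_ne_zero hab 0
  have hne' : Yv a - Yv b - c ≠ 0 := by
    simpa [c, ← sub_eq_add_neg] using Yv_sub_Yv_add_C_ne_zero hab (-κ)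
  rw [Dem_eq] at h
  have h' : (Yv a - Yv b - c) * (permMap (Equiv.swap a b) f - f) = 0 := by
    field_simp at h
    linear_combination h
  exact sub_eq_zero.mp ((mul_eq_zero.mp h').resolve_left hne')

theorem Dem_sum_apply_eq {k : ℕ} {κ : ℂ} {ρ : Equiv.Perm (Fin k) → RatField k → RatField k}
    (hmul : ∀ g h, ρ (g * h) = ρ g ∘ ρ h) {a b : Fin k} (hab : ρ (Equiv.swap a b) = Dem κ a b)
    (x : RatField k) : Dem κ a b (∑ σ, ρ σ x) = ∑ σ, ρ σ x := by
  rw [Dem_sum, ← hab]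
  simp only [← Function.comp_apply (f := ρ _), ← hmul]
  exact Equiv.sum_comp (Equiv.mulLeft _) (ρ · x)

theorem permMap_Dem {k : ℕ} (κ : ℂ) (a b : Fin k) (σ : Equiv.Perm (Fin k)) (f : RatField k) :
    permMap σ (Dem κ a b f) =
      (1 - algebraMap (MvPolynomial (Fin k) ℂ) (RatField k) (C κ) / (Yv (σ a) - Yv (σ b))) *
          permMap (σ * Equiv.swap a b) f +
        algebraMap (MvPolynomial (Fin k) ℂ) (RatField k) (C κ) / (Yv (σ a) - Yv (σ b)) *
          permMap σ f := by
  simp only [Dem_eq, map_add, map_mul, map_sub, map_div₀, map_one, permMap_Yv,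
    permMap_algebraMap_C, permMap_mul, RingHom.comp_apply]

noncomputable def weightedSymmetrize (k : ℕ) (κ : ℂ) (f : RatField k) : RatField k :=
  ∑ σ : Equiv.Perm (Fin k),
    symmetrizerWeight (algebraMap (MvPolynomial (Fin k) ℂ) (RatField k) (C κ)) (Yv ∘ σ) *
      permMap σ f

theorem weightedSymmetrize_sum {k : ℕ} (κ : ℂ) {ι : Type*} (s : Finset ι) (g : ι → RatField k) :
    weightedSymmetrize k κ (∑ i ∈ s, g i) = ∑ i ∈ s, weightedSymmetrize k κ (g i) := by
  simp only [weightedSymmetrize, map_sum, mul_sum]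
  exact sum_comm

theorem weightedSymmetrize_Dem {k : ℕ} (κ : ℂ) {a b : Fin k} (hab : (a : ℕ) + 1 = b)
    (f : RatField k) : weightedSymmetrize k κ (Dem κ a b f) = weightedSymmetrize k κ f := by
  have hab' : a ≠ b := fun h => by simp [h] at hab
  simp only [weightedSymmetrize, permMap_Dem, mul_add, ← mul_assoc, sum_add_distrib]
  set c := algebraMap (MvPolynomial (Fin k) ℂ) (RatField k) (C κ)
  set s := Equiv.swap a b
  have hreindex : ∑ σ : Equiv.Perm (Fin k),
      symmetrizerWeight c (Yv ∘ σ) * (1 - c / (Yv (σ a) - Yv (σ b))) * permMap (σ * s) f =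
      ∑ σ : Equiv.Perm (Fin k),
        symmetrizerWeight c (Yv ∘ σ ∘ s) * (1 - c / (Yv (σ b) - Yv (σ a))) * permMap σ f := by
    rw [← Equiv.sum_comp (Equiv.mulRight s)]
    simp [s, mul_assoc, Equiv.Perm.coe_mul]
  rw [hreindex, ← sum_add_distrib]
  refine sum_congr rfl fun σ _ => ?_
  rw [← add_mul, ← Function.comp_assoc]
  exact congrArg (· * permMap σ f)
    (symmetrizerWeight_comp_swap c hab ((Yv_injective.comp σ.injective).ne hab'))

theorem weightedSymmetrize_of_forall_permMap_eq {k : ℕ} (κ : ℂ) {f : RatField k}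
    (hf : ∀ g, permMap g f = f) : weightedSymmetrize k κ f = k.factorial * f := by
  simp only [weightedSymmetrize, hf, ← sum_mul, sum_symmetrizerWeight_comp_perm _ Yv_injective]

theorem Fin.perm_induction_on_adjacent_swaps {k : ℕ} {motive : Equiv.Perm (Fin k) → Prop}
    (one : motive 1)
    (swap_mul : ∀ (i : ℕ) (h : i + 1 < k) (σ : Equiv.Perm (Fin k)),
      motive σ → motive (Equiv.swap ⟨i, Nat.lt_of_succ_lt h⟩ ⟨i + 1, h⟩ * σ))
    (σ : Equiv.Perm (Fin k)) : motive σ := by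
  cases k with
  | zero => exact Subsingleton.elim 1 σ ▸ one
  | succ n =>
    refine Submonoid.induction_of_closure_eq_top_left (Equiv.Perm.mclosure_swap_castSucc_succ n)
      σ one ?_
    rintro _ ⟨i, rfl⟩ τ hτ
    exact swap_mul i (by omega) τ hτ

/-- Let `ρ` be the action of `S_k` in which each simple transposition
acts by the Demazure-type operator `σ_i^κ`, and let `e_k^κ` be the induced action of the
full symmetrizer `e_k = (1/k!) ∑_{σ ∈ S_k} σ`.  Then for any polynomial `f`,
`e_k^κ f = (1/k!) ∑_{σ ∈ S_k} ∏_{i<j} ((Y_{σ(i)} − Y_{σ(j)} + κ)/(Y_{σ(i)} − Y_{σ(j)})) ·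
f(Y_{σ(1)},…,Y_{σ(k)})`. -/
theorem statement4 (k : ℕ) (κ : ℂ)
    (ρ : Equiv.Perm (Fin k) → RatField k → RatField k)
    (hone : ρ 1 = id)
    (hmul : ∀ g h : Equiv.Perm (Fin k), ρ (g * h) = ρ g ∘ ρ h)
    (hgen : ∀ (i : ℕ) (h : i + 1 < k),
      ρ (Equiv.swap ⟨i, by omega⟩ ⟨i + 1, h⟩) = Dem κ ⟨i, by omega⟩ ⟨i + 1, h⟩)
    (p : MvPolynomial (Fin k) ℂ) :
    ((k.factorial : RatField k))⁻¹ *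
        ∑ σ : Equiv.Perm (Fin k),
          ρ σ (algebraMap (MvPolynomial (Fin k) ℂ) (RatField k) p) =
      ((k.factorial : RatField k))⁻¹ *
        ∑ σ : Equiv.Perm (Fin k),
          (∏ q ∈ Finset.univ.filter fun q : Fin k × Fin k => q.1 < q.2,
            ((Yv (σ q.1) - Yv (σ q.2) +
                algebraMap (MvPolynomial (Fin k) ℂ) (RatField k) (C κ)) /
              (Yv (σ q.1) - Yv (σ q.2)))) *
            permMap σ (algebraMap (MvPolynomial (Fin k) ℂ) (RatField k) p) := by
  congr 1
  change _ = weightedSymmetrize k κ _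
  set f := algebraMap (MvPolynomial (Fin k) ℂ) (RatField k) p
  have hρ : ∀ σ x, weightedSymmetrize k κ (ρ σ x) = weightedSymmetrize k κ x := by
    intro σ
    induction σ using Fin.perm_induction_on_adjacent_swaps with
    | one => simp [hone]
    | swap_mul i h σ ih =>
      intro x
      rw [hmul, Function.comp_apply, hgen, weightedSymmetrize_Dem κ rfl, ih]
  have hsymm : ∀ g, permMap g (∑ σ, ρ σ f) = ∑ σ, ρ σ f := by
    intro g
    induction g using Fin.perm_induction_on_adjacent_swaps with
    | one => simp [permMap_one]
    | swap_mul i h g ih =>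
      rw [permMap_mul, RingHom.comp_apply, ih]
      exact permMap_swap_eq_of_Dem_eq κ (by simp [Fin.ext_iff]) (Dem_sum_apply_eq hmul (hgen i h) f)
  refine mul_left_cancel₀ (Nat.cast_ne_zero.mpr k.factorial_ne_zero) ?_
  rw [← weightedSymmetrize_of_forall_permMap_eq κ hsymm, weightedSymmetrize_sum]
  simp [hρ, Fintype.card_perm]
end

section
/- (Cayley-Hamilton for the quantum determinant) Let E = (E_{ij}) be the matrix of generators of U_ℏ(gl_N) and A(u) = ∑_{i=0}^N A_i u^{N-i} the quantum determinant with central coefficients. Then A(E) = 0 as an N×N matrix over U_ℏ(gl_N), i.e. ∑_{i=0}^N A_i E^{N-i} = 0 where E^m denotes the matrix power. -/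
open Polynomial

/-- The `m`-th factor `T_{σ(m), m}(u − (m−1)ℏ) = δ_{σ(m),m} u + (E_{σ(m),m} − δ_{σ(m),m} (m−1) ℏ)`
of the quantum minor (0-indexed, so the shift in the `m`-th factor is `m·ℏ`). -/
noncomputable def Tfac {R : Type*} [CommRing R] (hbar : R) {A : Type*} [Ring A]
    [Algebra R A] {N : ℕ} (E : Fin N → Fin N → A) (σ : Equiv.Perm (Fin N)) (m : Fin N) :
    Polynomial A :=
  (if σ m = m then (Polynomial.X : Polynomial A) else 0) +
    Polynomial.C (E (σ m) m - if σ m = m then (m : ℕ) • (hbar • (1 : A)) else 0)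

/-- The full quantum minor `T^{1…N}_{1…N}(u) = ∑_σ sgn(σ) T_{σ(1)1}(u) T_{σ(2)2}(u−ℏ) ⋯
T_{σ(N)N}(u−(N−1)ℏ)` of the T-operator `T(u) = u + E`. -/
noncomputable def qminor {R : Type*} [CommRing R] (hbar : R) {A : Type*} [Ring A]
    [Algebra R A] {N : ℕ} (E : Fin N → Fin N → A) : Polynomial A :=
  ∑ σ : Equiv.Perm (Fin N),
    (Equiv.Perm.sign σ : ℤ) • (List.ofFn fun m : Fin N => Tfac hbar E σ m).prod

/-- The quantum determinant `A(u) = (−1)^N T^{1…N}_{1…N}(−u + Nℏ − ℏ)`, whose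
coefficients `A_i` (with `A(u) = ∑_{i=0}^N A_i u^{N-i}`) are central. -/
noncomputable def qdet {R : Type*} [CommRing R] (hbar : R) {A : Type*} [Ring A]
    [Algebra R A] {N : ℕ} (E : Fin N → Fin N → A) : Polynomial A :=
  ((-1 : ℤ) ^ N) •
    (qminor hbar E).comp
      (Polynomial.C (N • (hbar • (1 : A)) - hbar • (1 : A)) - Polynomial.X)

section CayleyHamiltonAux
section Abs
variable {B : Type*} [Ring B]

private lemma expand4 (d d' w w' x y : B)
    (hd : ∀ z, d * z = z * d) (hd' : ∀ z, d' * z = z * d')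
    (hw' : ∀ z, w' * z = z * w') :
    (d * w + x) * (d' * w' + y) = d * (d' * (w * w')) + d * (w * y) + d' * (w' * x) + x * y := by
  have h1 : d * w * (d' * w') = d * (d' * (w * w')) := by
    rw [mul_assoc, ← mul_assoc w d', ← hd' w, mul_assoc]
  have h2 : x * (d' * w') = d' * (w' * x) := by
    rw [← mul_assoc, ← hd' x, mul_assoc, ← hw' x]
  rw [add_mul, mul_add, mul_add, h1, h2, mul_assoc d w y]; abel

private lemma key0_abs (w h : B) (hw : ∀ x, w * x = x * w) (hh : ∀ x, h * x = x * h)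
    (d1 d2 : B) (hd1 : ∀ x, d1 * x = x * d1) (hd2 : ∀ x, d2 * x = x * d2)
    (a b : B) (hab : a * b - b * a = h * (d2 * a - d1 * b)) :
    (d1 * w + a) * (d2 * (w - h) + b) = (d2 * w + b) * (d1 * (w - h) + a) := by
  have hwh : ∀ z, (w - h) * z = z * (w - h) := fun z => by
    rw [sub_mul, mul_sub, hw, hh]
  rw [expand4 d1 d2 w (w - h) a b hd1 hd2 hwh,
      expand4 d2 d1 w (w - h) b a hd2 hd1 hwh]
  have e1 : d2 * ((w - h) * a) = d2 * (w * a) - d2 * (h * a) := by rw [sub_mul, mul_sub]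
  have e2 : d1 * ((w - h) * b) = d1 * (w * b) - d1 * (h * b) := by rw [sub_mul, mul_sub]
  have e3 : d1 * (d2 * (w * (w - h))) = d2 * (d1 * (w * (w - h))) := by
    rw [← mul_assoc, hd1 d2, mul_assoc]
  have hab' : a * b = b * a + (h * (d2 * a) - h * (d1 * b)) := by
    rw [← mul_sub]; linear_combination (norm := noncomm_ring) hab
  have c1 : h * (d2 * a) = d2 * (h * a) := by rw [← mul_assoc, ← hd2 h, mul_assoc]
  have c2 : h * (d1 * b) = d1 * (h * b) := by rw [← mul_assoc, ← hd1 h, mul_assoc]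
  rw [e1, e2, e3, hab', c1, c2]
  abel

private lemma key_abs (w h : B) (hw : ∀ x, w * x = x * w) (hh : ∀ x, h * x = x * h)
    (d1 d2 d3 d4 : B) (hd1 : ∀ x, d1 * x = x * d1) (hd2 : ∀ x, d2 * x = x * d2)
    (hd3 : ∀ x, d3 * x = x * d3) (hd4 : ∀ x, d4 * x = x * d4)
    (p q r s : B)
    (h1 : p * q - q * p = h * (d3 * r - d2 * s))
    (h2 : r * s - s * r = h * (d4 * p - d1 * q)) :
    (d1 * w + p) * (d4 * (w - h) + q) + (d2 * w + r) * (d3 * (w - h) + s)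
      = (d3 * w + s) * (d2 * (w - h) + r) + (d4 * w + q) * (d1 * (w - h) + p) := by
  have hwh : ∀ z, (w - h) * z = z * (w - h) := fun z => by
    rw [sub_mul, mul_sub, hw, hh]
  rw [expand4 d1 d4 w (w - h) p q hd1 hd4 hwh,
      expand4 d2 d3 w (w - h) r s hd2 hd3 hwh,
      expand4 d3 d2 w (w - h) s r hd3 hd2 hwh,
      expand4 d4 d1 w (w - h) q p hd4 hd1 hwh]
  have e : ∀ x : B, (w - h) * x = w * x - h * x := fun x => sub_mul w h x
  have h1' : p * q = q * p + (h * (d3 * r) - h * (d2 * s)) := by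
    rw [← mul_sub]; linear_combination (norm := noncomm_ring) h1
  have h2' : r * s = s * r + (h * (d4 * p) - h * (d1 * q)) := by
    rw [← mul_sub]; linear_combination (norm := noncomm_ring) h2
  have c : ∀ (d x : B), (∀ z, d * z = z * d) → h * (d * x) = d * (h * x) := fun d x hd => by
    rw [← mul_assoc, ← hd h, mul_assoc]
  have e3 : d1 * (d4 * (w * (w - h))) = d4 * (d1 * (w * (w - h))) := by
    rw [← mul_assoc, hd1 d4, mul_assoc]
  have e4 : d2 * (d3 * (w * (w - h))) = d3 * (d2 * (w * (w - h))) := by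
    rw [← mul_assoc, hd2 d3, mul_assoc]
  rw [e q, e p, e s, e r, mul_sub d4, mul_sub d3, mul_sub d2, mul_sub d1,
      h1', h2', c d3 r hd3, c d2 s hd2, c d4 p hd4, c d1 q hd1, e3, e4]
  abel
end Abs

section Poly
variable {R : Type*} [CommRing R] {A : Type*} [Ring A] [Algebra R A] (hbar : R)

private lemma C_central {a : A} (ha : ∀ x, a * x = x * a) (p : Polynomial A) :
    C a * p = p * C a := by
  ext n; rw [coeff_C_mul, coeff_mul_C, ha]

private lemma smul_one_central (s : ℕ) (x : A) :
    ((s • (hbar • (1 : A))) * x = x * (s • (hbar • (1:A)))) := by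
  rw [smul_mul_assoc, mul_smul_comm, smul_mul_assoc, mul_smul_comm, one_mul, mul_one]

variable {N : ℕ} (E : Fin N → Fin N → A)

noncomputable def tt (s : ℕ) (i j : Fin N) : Polynomial A :=
  (if i = j then (X : Polynomial A) else 0) +
    C (E i j - if i = j then s • (hbar • (1 : A)) else 0)

lemma tt_eq (s : ℕ) (i j : Fin N) :
    tt hbar E s i j
      = (if i = j then (1:Polynomial A) else 0) * (X - C (s • (hbar • (1:A)))) + C (E i j) := by
  unfold tt
  split_ifs with h
  · rw [one_mul, map_sub]; abel
  · rw [zero_mul, sub_zero, zero_add]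

private lemma w_central (s : ℕ) (p : Polynomial A) :
    (X - C ((s:ℕ) • (hbar • (1:A)))) * p = p * (X - C (s • (hbar • (1:A)))) := by
  rw [sub_mul, mul_sub, X_mul, C_central (smul_one_central hbar s)]

private lemma h_central (p : Polynomial A) :
    (C (hbar • (1:A))) * p = p * C (hbar • (1:A)) := by
  have := smul_one_central (A := A) hbar 1
  simp only [one_smul] at this
  exact C_central this p

private lemma w_sub_h (s : ℕ) :
    (X - C ((s:ℕ) • (hbar • (1:A)))) - C (hbar • (1:A)) = X - C ((s+1) • (hbar • (1:A))) := by
  rw [succ_nsmul, map_add]; abel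

private lemma d_central (P : Prop) [Decidable P] (p : Polynomial A) :
    (if P then (1:Polynomial A) else 0) * p = p * (if P then (1:Polynomial A) else 0) := by
  split_ifs <;> simp

private lemma comm_inst (hE : ∀ i j k l, E i j * E k l - E k l * E i j =
      hbar • ((if j = k then E i l else 0) - (if l = i then E k j else 0)))
    (i j k l : Fin N) :
    C (E i j) * C (E k l) - C (E k l) * C (E i j)
      = C (hbar • (1:A)) *
        ((if k = j then (1:Polynomial A) else 0) * C (E i l)
          - (if i = l then (1:Polynomial A) else 0) * C (E k j)) := by
  rw [← map_mul, ← map_mul, ← map_sub, hE i j k l]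
  have : hbar • ((if j = k then E i l else 0) - (if l = i then E k j else 0))
      = (hbar • (1:A)) * ((if j = k then E i l else 0) - (if l = i then E k j else 0)) := by
    rw [smul_mul_assoc, one_mul]
  rw [this, map_mul, map_sub]
  congr 2
  · simp only [apply_ite C, map_zero, boole_mul, eq_comm]
  · simp only [apply_ite C, map_zero, boole_mul, eq_comm]

lemma key0' (hE : ∀ i j k l, E i j * E k l - E k l * E i j =
      hbar • ((if j = k then E i l else 0) - (if l = i then E k j else 0)))
    (s : ℕ) (i k b : Fin N) :
    tt hbar E s i b * tt hbar E (s+1) k b = tt hbar E s k b * tt hbar E (s+1) i b := by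
  rw [tt_eq, tt_eq, tt_eq, tt_eq, ← w_sub_h]
  exact key0_abs _ _ (w_central hbar s) (h_central hbar) _ _
    (d_central _) (d_central _) _ _
    (comm_inst hbar E hE i b k b)

lemma key' (hE : ∀ i j k l, E i j * E k l - E k l * E i j =
      hbar • ((if j = k then E i l else 0) - (if l = i then E k j else 0)))
    (s : ℕ) (i k b c : Fin N) :
    tt hbar E s i b * tt hbar E (s+1) k c + tt hbar E s i c * tt hbar E (s+1) k b
      = tt hbar E s k b * tt hbar E (s+1) i c + tt hbar E s k c * tt hbar E (s+1) i b := by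
  simp only [tt_eq, ← w_sub_h]
  exact key_abs _ _ (w_central hbar s) (h_central hbar) _ _ _ _
    (d_central _) (d_central _) (d_central _) (d_central _) _ _ _ _
    (comm_inst hbar E hE i b k c)
    (comm_inst hbar E hE i c k b)
end Poly

section Dev2
variable {R : Type*} [CommRing R] {A : Type*} [Ring A] [Algebra R A] (hbar : R)
variable {N : ℕ} (E : Fin N → Fin N → A)

noncomputable def FF (c : Fin N → Fin N) (σ : Equiv.Perm (Fin N)) : Polynomial A :=
  (List.ofFn fun x : Fin N => tt hbar E (x : ℕ) (σ x) (c x)).prod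

noncomputable def QQ (c : Fin N → Fin N) : Polynomial A :=
  ∑ σ : Equiv.Perm (Fin N), (Equiv.Perm.sign σ : ℤ) • FF hbar E c σ

lemma mem_take_fin {m : ℕ} {x : Fin N} (hx : x ∈ (List.finRange N).take m) : (x:ℕ) < m := by
  obtain ⟨i, hi, he⟩ := List.mem_iff_getElem.1 hx
  rw [List.getElem_take] at he
  have := congrArg Fin.val he
  simp [List.getElem_finRange] at this
  rw [List.length_take, List.length_finRange] at hi
  omega

lemma mem_drop_fin {k : ℕ} {x : Fin N} (hx : x ∈ (List.finRange N).drop k) : k ≤ (x:ℕ) := by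
  obtain ⟨i, hi, he⟩ := List.mem_iff_getElem.1 hx
  rw [List.getElem_drop] at he
  have := congrArg Fin.val he
  simp [List.getElem_finRange] at this
  omega

lemma prod_split {B : Type*} [Monoid B] (f : Fin N → B) (a b : Fin N)
    (hb : (b:ℕ) = (a:ℕ) + 1) :
    (List.ofFn f).prod =
      (((List.finRange N).take (a:ℕ)).map f).prod *
        (f a * (f b * (((List.finRange N).drop ((a:ℕ)+2)).map f).prod)) := by
  have h1 : (a:ℕ) < (List.finRange N).length := by
    rw [List.length_finRange]; exact a.isLt
  have h2 : (a:ℕ)+1 < (List.finRange N).length := by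
    rw [List.length_finRange]; rw [← hb]; exact b.isLt
  have g1 : (List.finRange N)[(a:ℕ)]'h1 = a := by
    simp [List.getElem_finRange, Fin.ext_iff]
  have g2 : (List.finRange N)[(a:ℕ)+1]'h2 = b := by
    simp [List.getElem_finRange, Fin.ext_iff, hb]
  conv_lhs => rw [List.ofFn_eq_map, ← List.take_append_drop (a:ℕ) (List.finRange N),
    List.drop_eq_getElem_cons h1, List.drop_eq_getElem_cons h2]
  rw [g1, g2]
  simp [List.prod_append, mul_assoc]

variable (hE : ∀ i j k l, E i j * E k l - E k l * E i j =
      hbar • ((if j = k then E i l else 0) - (if l = i then E k j else 0)))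

include hE in
lemma QQ_swap {a b : Fin N} (hb : (b:ℕ) = (a:ℕ) + 1) (c : Fin N → Fin N) :
    QQ hbar E (c ∘ (Equiv.swap a b)) = - QQ hbar E c := by
  have hab : a ≠ b := by intro h; rw [h] at hb; omega
  set τ := Equiv.swap a b with hτdef
  have hττ : ∀ σ : Equiv.Perm (Fin N), σ * τ * τ = σ := by
    intro σ; rw [mul_assoc, Equiv.swap_mul_self, mul_one]
  have hsign : ∀ σ : Equiv.Perm (Fin N),
      ((Equiv.Perm.sign (σ * τ) : ℤ)) = -(Equiv.Perm.sign σ : ℤ) := by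
    intro σ; rw [map_mul, Equiv.Perm.sign_swap hab]; simp
  have hτfix : ∀ x : Fin N, (x:ℕ) < (a:ℕ) ∨ (a:ℕ) + 2 ≤ (x:ℕ) → τ x = x := by
    intro x hx
    apply Equiv.swap_apply_of_ne_of_ne <;> · intro h; rw [h] at hx; omega
  have hτa : τ a = b := Equiv.swap_apply_left a b
  have hτb : τ b = a := Equiv.swap_apply_right a b
  -- congruence for prefixes and suffixes
  have hpre : ∀ (σ : Equiv.Perm (Fin N)) (c' : Fin N → Fin N),
      (((List.finRange N).take (a:ℕ)).map fun x : Fin N => tt hbar E (x:ℕ) ((σ * τ) x) ((c' ∘ τ) x))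
        = ((List.finRange N).take (a:ℕ)).map fun x : Fin N => tt hbar E (x:ℕ) (σ x) (c' x) := by
    intro σ c'
    apply List.map_congr_left
    intro x hx
    have := hτfix x (Or.inl (mem_take_fin hx))
    simp [Equiv.Perm.mul_apply, Function.comp, this]
  have hpost : ∀ (σ : Equiv.Perm (Fin N)) (c' : Fin N → Fin N),
      (((List.finRange N).drop ((a:ℕ)+2)).map fun x : Fin N => tt hbar E (x:ℕ) ((σ * τ) x) ((c' ∘ τ) x))
        = ((List.finRange N).drop ((a:ℕ)+2)).map fun x : Fin N => tt hbar E (x:ℕ) (σ x) (c' x) := by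
    intro σ c'
    apply List.map_congr_left
    intro x hx
    have := hτfix x (Or.inr (mem_drop_fin hx))
    simp [Equiv.Perm.mul_apply, Function.comp, this]
  -- the main 4-term claim
  have claim : ∀ σ : Equiv.Perm (Fin N),
      FF hbar E c σ + FF hbar E (c ∘ τ) σ
        = FF hbar E c (σ * τ) + FF hbar E (c ∘ τ) (σ * τ) := by
    intro σ
    have h1 := prod_split (fun x : Fin N => tt hbar E (x:ℕ) (σ x) (c x)) a b hb
    have h2 := prod_split (fun x : Fin N => tt hbar E (x:ℕ) (σ x) ((c ∘ τ) x)) a b hb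
    have h3 := prod_split (fun x : Fin N => tt hbar E (x:ℕ) ((σ * τ) x) (c x)) a b hb
    have h4 := prod_split (fun x : Fin N => tt hbar E (x:ℕ) ((σ * τ) x) ((c ∘ τ) x)) a b hb
    rw [FF, FF, FF, FF, h1, h2, h3, h4]
    -- normalize prefixes and suffixes of the τ-twisted versions
    have e2pre : (((List.finRange N).take (a:ℕ)).map fun x : Fin N => tt hbar E (x:ℕ) (σ x) ((c ∘ τ) x))
        = ((List.finRange N).take (a:ℕ)).map fun x : Fin N => tt hbar E (x:ℕ) (σ x) (c x) := by
      apply List.map_congr_left; intro x hx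
      have := hτfix x (Or.inl (mem_take_fin hx)); simp [Function.comp, this]
    have e2post : (((List.finRange N).drop ((a:ℕ)+2)).map fun x : Fin N => tt hbar E (x:ℕ) (σ x) ((c ∘ τ) x))
        = ((List.finRange N).drop ((a:ℕ)+2)).map fun x : Fin N => tt hbar E (x:ℕ) (σ x) (c x) := by
      apply List.map_congr_left; intro x hx
      have := hτfix x (Or.inr (mem_drop_fin hx)); simp [Function.comp, this]
    have e3pre : (((List.finRange N).take (a:ℕ)).map fun x : Fin N => tt hbar E (x:ℕ) ((σ * τ) x) (c x))
        = ((List.finRange N).take (a:ℕ)).map fun x : Fin N => tt hbar E (x:ℕ) (σ x) (c x) := by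
      apply List.map_congr_left; intro x hx
      have := hτfix x (Or.inl (mem_take_fin hx)); simp [Equiv.Perm.mul_apply, this]
    have e3post : (((List.finRange N).drop ((a:ℕ)+2)).map fun x : Fin N => tt hbar E (x:ℕ) ((σ * τ) x) (c x))
        = ((List.finRange N).drop ((a:ℕ)+2)).map fun x : Fin N => tt hbar E (x:ℕ) (σ x) (c x) := by
      apply List.map_congr_left; intro x hx
      have := hτfix x (Or.inr (mem_drop_fin hx)); simp [Equiv.Perm.mul_apply, this]
    rw [e2pre, e2post, e3pre, e3post, hpre σ c, hpost σ c]
    simp only [Function.comp_apply, Equiv.Perm.mul_apply, hτa, hτb]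
    rw [← mul_add, ← mul_add, ← mul_assoc, ← mul_assoc, ← mul_assoc, ← mul_assoc,
      ← add_mul, ← add_mul]
    congr 2
    rw [hb]
    exact key' hbar E hE (a:ℕ) (σ a) (σ b) (c a) (c b)
  -- now the involution argument
  rw [eq_neg_iff_add_eq_zero, QQ, QQ]
  have reindex : (∑ σ : Equiv.Perm (Fin N), (Equiv.Perm.sign σ : ℤ) • FF hbar E (c ∘ τ) σ)
      = ∑ σ : Equiv.Perm (Fin N), (Equiv.Perm.sign (σ * τ) : ℤ) • FF hbar E (c ∘ τ) (σ * τ) :=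
    (Equiv.sum_comp (Equiv.mulRight τ) _).symm
  rw [reindex, ← Finset.sum_add_distrib]
  apply Finset.sum_involution (fun σ _ => σ * τ)
  · intro σ _
    rw [hττ σ, hsign σ]
    have hc := claim σ
    have gen : ∀ (Xp Yp Zp Wp : Polynomial A) (s : ℤ), Yp + Wp = Zp + Xp →
        (-s • Xp + s • Yp) + (s • Wp + -s • Zp) = 0 := by
      intro Xp Yp Zp Wp s h
      calc (-s • Xp + s • Yp) + (s • Wp + -s • Zp)
          = (s • Yp + s • Wp) - (s • Xp + s • Zp) := by
            simp only [neg_smul]; abel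
        _ = s • (Yp + Wp) - s • (Xp + Zp) := by rw [smul_add, smul_add]
        _ = 0 := by rw [h, add_comm Xp Zp, sub_self]
    exact gen _ _ _ _ _ hc
  · intro σ _ _
    intro h
    have h2 : σ (τ a) = σ a := by rw [← Equiv.Perm.mul_apply, h]
    rw [hτa] at h2
    exact hab (σ.injective h2).symm
  · intro σ _; exact Finset.mem_univ _
  · intro σ _; exact hττ σ

include hE in
lemma QQ_adj {a b : Fin N} (hb : (b:ℕ) = (a:ℕ) + 1) (c : Fin N → Fin N)
    (hc : c a = c b) : QQ hbar E c = 0 := by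
  have hab : a ≠ b := by intro h; rw [h] at hb; omega
  set τ := Equiv.swap a b with hτdef
  have hττ : ∀ σ : Equiv.Perm (Fin N), σ * τ * τ = σ := by
    intro σ; rw [mul_assoc, Equiv.swap_mul_self, mul_one]
  have hsign : ∀ σ : Equiv.Perm (Fin N),
      ((Equiv.Perm.sign (σ * τ) : ℤ)) = -(Equiv.Perm.sign σ : ℤ) := by
    intro σ; rw [map_mul, Equiv.Perm.sign_swap hab]; simp
  have hτfix : ∀ x : Fin N, (x:ℕ) < (a:ℕ) ∨ (a:ℕ) + 2 ≤ (x:ℕ) → τ x = x := by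
    intro x hx
    apply Equiv.swap_apply_of_ne_of_ne <;> · intro h; rw [h] at hx; omega
  have hτa : τ a = b := Equiv.swap_apply_left a b
  have hτb : τ b = a := Equiv.swap_apply_right a b
  have claim : ∀ σ : Equiv.Perm (Fin N), FF hbar E c (σ * τ) = FF hbar E c σ := by
    intro σ
    have h1 := prod_split (fun x : Fin N => tt hbar E (x:ℕ) (σ x) (c x)) a b hb
    have h3 := prod_split (fun x : Fin N => tt hbar E (x:ℕ) ((σ * τ) x) (c x)) a b hb
    rw [FF, FF, h1, h3]
    have e3pre : (((List.finRange N).take (a:ℕ)).map fun x : Fin N => tt hbar E (x:ℕ) ((σ * τ) x) (c x))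
        = ((List.finRange N).take (a:ℕ)).map fun x : Fin N => tt hbar E (x:ℕ) (σ x) (c x) := by
      apply List.map_congr_left; intro x hx
      have := hτfix x (Or.inl (mem_take_fin hx)); simp [Equiv.Perm.mul_apply, this]
    have e3post : (((List.finRange N).drop ((a:ℕ)+2)).map fun x : Fin N => tt hbar E (x:ℕ) ((σ * τ) x) (c x))
        = ((List.finRange N).drop ((a:ℕ)+2)).map fun x : Fin N => tt hbar E (x:ℕ) (σ x) (c x) := by
      apply List.map_congr_left; intro x hx
      have := hτfix x (Or.inr (mem_drop_fin hx)); simp [Equiv.Perm.mul_apply, this]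
    rw [e3pre, e3post]
    simp only [Equiv.Perm.mul_apply, hτa, hτb]
    congr 1
    rw [← mul_assoc, ← mul_assoc]
    congr 1
    rw [hb, ← hc]
    exact (key0' hbar E hE (a:ℕ) (σ a) (σ b) (c a)).symm
  rw [QQ]
  apply Finset.sum_involution (fun σ _ => σ * τ)
  · intro σ _
    rw [hsign σ, claim σ, ← add_smul]
    simp
  · intro σ _ _ h
    have h2 : σ (τ a) = σ a := by rw [← Equiv.Perm.mul_apply, h]
    rw [hτa] at h2
    exact hab (σ.injective h2).symm
  · intro σ _; exact Finset.mem_univ _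
  · intro σ _; exact hττ σ

include hE in
lemma QQ_noninj (c : Fin N → Fin N) (a b : Fin N) (hab : (a:ℕ) < (b:ℕ))
    (hc : c a = c b) : QQ hbar E c = 0 := by
  have main : ∀ d : ℕ, ∀ (c : Fin N → Fin N) (a b : Fin N), (a:ℕ) < (b:ℕ) →
      (b:ℕ) - (a:ℕ) = d → c a = c b → QQ hbar E c = 0 := by
    intro d
    induction d using Nat.strong_induction_on with
    | _ d IH =>
      intro c a b hab hd hc
      rcases Nat.lt_or_ge ((a:ℕ) + 1) (b:ℕ) with hlt | hge
      · set b' : Fin N := ⟨(b:ℕ) - 1, by omega⟩ with hb'def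
        have hbb' : (b:ℕ) = (b':ℕ) + 1 := by
          show (b:ℕ) = (b:ℕ) - 1 + 1; omega
        set τ := Equiv.swap b' b with hτdef
        have hswap := QQ_swap hbar E hE (a := b') (b := b) hbb' (c ∘ τ)
        have hcc : (c ∘ τ) ∘ τ = c := by
          funext x; simp [Function.comp, hτdef]
        rw [hcc] at hswap
        have hτa : τ a = a := by
          apply Equiv.swap_apply_of_ne_of_ne <;>
            · intro h
              have := congrArg Fin.val h
              omega
        have hτb' : τ b' = b := Equiv.swap_apply_left b' b
        have h0 : QQ hbar E (c ∘ τ) = 0 := by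
          apply IH ((b':ℕ) - (a:ℕ)) _ (c ∘ τ) a b' _ rfl
          · simp only [Function.comp_apply, hτa, hτb', hc]
          · show (b:ℕ) - 1 - (a:ℕ) < d; omega
          · show (a:ℕ) < (b:ℕ) - 1; omega
        rw [h0] at hswap
        simpa using hswap
      · have hb : (b:ℕ) = (a:ℕ) + 1 := by omega
        exact QQ_adj hbar E hE hb c hc
  exact main _ c a b hab rfl hc

-- adjacent transpositions and the cycle rho
def tau (p : ℕ) : Equiv.Perm (Fin N) :=
  if h : p + 1 < N then Equiv.swap ⟨p, by omega⟩ ⟨p+1, h⟩ else 1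

def rho : ℕ → ℕ → Equiv.Perm (Fin N)
  | _, 0 => 1
  | i, (k+1) => (tau i : Equiv.Perm (Fin N)) * rho (i+1) k

lemma rho_concat (k : ℕ) : ∀ i : ℕ, (rho i (k+1) : Equiv.Perm (Fin N)) = rho i k * tau (i+k) := by
  induction k with
  | zero => intro i; simp [rho, Nat.add_zero]
  | succ k ih =>
    intro i
    show (tau i : Equiv.Perm (Fin N)) * rho (i+1) (k+1) = rho i (k+1) * tau (i+(k+1))
    rw [ih (i+1)]
    show (tau i : Equiv.Perm (Fin N)) * (rho (i+1) k * tau (i+1+k)) = (tau i * rho (i+1) k) * tau (i+(k+1))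
    have e : i + 1 + k = i + (k+1) := by omega
    rw [e]
    exact (mul_assoc _ _ _).symm

lemma rho_top (k : ℕ) : ∀ i : ℕ, (h : i + k < N) →
    (rho i k : Equiv.Perm (Fin N)) ⟨i + k, h⟩ = ⟨i, by omega⟩ := by
  induction k with
  | zero => intro i h; simp [rho]
  | succ k ih =>
    intro i h
    show (tau i : Equiv.Perm (Fin N)) ((rho (i+1) k) ⟨i + (k+1), h⟩)
      = ⟨i, by omega⟩
    have : (⟨i + (k+1), h⟩ : Fin N) = ⟨(i+1) + k, by omega⟩ := by
      simp [Fin.ext_iff]; omega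
    rw [this, ih (i+1) (by omega)]
    rw [tau, dif_pos (by omega : i + 1 < N)]
    exact Equiv.swap_apply_right _ _

include hE in
lemma QQ_rho (k : ℕ) : ∀ i : ℕ, i + k < N →
    QQ hbar E (⇑(rho i k : Equiv.Perm (Fin N))) = ((-1 : ℤ))^k • QQ hbar E id := by
  induction k with
  | zero => intro i _; simp [rho]
  | succ k ih =>
    intro i hik
    rw [rho_concat k i, tau, dif_pos (by omega : (i+k) + 1 < N)]
    rw [Equiv.Perm.coe_mul,
      QQ_swap hbar E hE (a := ⟨i+k, by omega⟩) (b := ⟨i+k+1, by omega⟩) rfl,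
      ih i (by omega), pow_succ, mul_smul, neg_one_smul, smul_neg]

end Dev2

section Expand
variable {R : Type*} [CommRing R] {A : Type*} [Ring A] [Algebra R A] (hbar : R)
variable {n : ℕ} (E : Fin (n+1) → Fin (n+1) → A)

noncomputable def GG (c : Fin (n+1) → Fin (n+1)) (k : Fin (n+1)) : Polynomial A :=
  ∑ σ ∈ Finset.univ.filter (fun σ : Equiv.Perm (Fin (n+1)) => σ (Fin.last n) = k),
    (Equiv.Perm.sign σ : ℤ) •
      (List.ofFn fun m : Fin n => tt hbar E (m:ℕ) (σ m.castSucc) (c m.castSucc)).prod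

lemma GG_congr (c c' : Fin (n+1) → Fin (n+1))
    (h : ∀ m : Fin n, c m.castSucc = c' m.castSucc) (k : Fin (n+1)) :
    GG hbar E c k = GG hbar E c' k := by
  unfold GG
  apply Finset.sum_congr rfl
  intro σ _
  have : (fun m : Fin n => tt hbar E (m:ℕ) (σ m.castSucc) (c m.castSucc))
      = fun m : Fin n => tt hbar E (m:ℕ) (σ m.castSucc) (c' m.castSucc) := by
    funext m; rw [h m]
  rw [this]

set_option maxHeartbeats 1000000 in
lemma QQ_expand (c : Fin (n+1) → Fin (n+1)) :
    QQ hbar E c = ∑ k, GG hbar E c k * tt hbar E n k (c (Fin.last n)) := by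
  rw [QQ]
  have step : ∀ σ : Equiv.Perm (Fin (n+1)), FF hbar E c σ =
      (List.ofFn fun m : Fin n => tt hbar E (m:ℕ) (σ m.castSucc) (c m.castSucc)).prod
        * tt hbar E n (σ (Fin.last n)) (c (Fin.last n)) := by
    intro σ
    rw [FF, List.ofFn_succ', List.prod_concat]
    simp only [Fin.coe_castSucc, Fin.val_last]
  have step2 : ∑ σ : Equiv.Perm (Fin (n+1)), (Equiv.Perm.sign σ : ℤ) • FF hbar E c σ
      = ∑ σ : Equiv.Perm (Fin (n+1)),
          ((Equiv.Perm.sign σ : ℤ) •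
            (List.ofFn fun m : Fin n => tt hbar E (m:ℕ) (σ m.castSucc) (c m.castSucc)).prod)
            * tt hbar E n (σ (Fin.last n)) (c (Fin.last n)) := by
    apply Finset.sum_congr rfl
    intro σ _
    rw [step σ, smul_mul_assoc]
  rw [step2, ← Finset.sum_fiberwise Finset.univ
    (fun σ : Equiv.Perm (Fin (n+1)) => σ (Fin.last n))
    (fun σ : Equiv.Perm (Fin (n+1)) =>
      ((Equiv.Perm.sign σ : ℤ) •
        (List.ofFn fun m : Fin n => tt hbar E (m:ℕ) (σ m.castSucc) (c m.castSucc)).prod)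
        * tt hbar E n (σ (Fin.last n)) (c (Fin.last n)))]
  apply Finset.sum_congr rfl
  intro k _
  rw [GG, Finset.sum_mul]
  apply Finset.sum_congr rfl
  intro σ hσ
  rw [(Finset.mem_filter.mp hσ).2]
end Expand

section Psi
variable {R : Type*} [CommRing R] {A : Type*} [Ring A] [Algebra R A]

lemma psi_zero {N : ℕ} (E : Fin N → Fin N → A)
    (G : Matrix (Fin N) (Fin N) (Polynomial A)) (B : ℕ)
    (hG : ∀ i j, (G i j).coeff B = 0) :
    ∑ d ∈ Finset.range (B+1),
      ((G * ((X : Polynomial A) • (1 : Matrix (Fin N) (Fin N) (Polynomial A))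
          - Matrix.of fun i j => C (E i j))).map (fun p => p.coeff d)) * (Matrix.of E)^d
      = 0 := by
  have hsplit : ∀ d : ℕ,
      ((G * ((X : Polynomial A) • 1 - Matrix.of fun i j => C (E i j))).map (fun p => p.coeff d))
      = (G * ((X : Polynomial A) • 1)).map (fun p => p.coeff d)
        - (G * (Matrix.of fun i j => C (E i j))).map (fun p => p.coeff d) := by
    intro d; ext i j
    simp [Matrix.mul_sub, Matrix.sub_apply, coeff_sub]
  have hX : ∀ (i j : Fin N), (G * ((X : Polynomial A) • 1)) i j = G i j * X := by
    intro i j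
    rw [Matrix.mul_apply]
    rw [Finset.sum_eq_single j]
    · simp [Matrix.smul_apply, Matrix.one_apply]
    · intro k _ hk
      simp [Matrix.smul_apply, Matrix.one_apply, hk]
    · simp
  have claim1 : ∀ d : ℕ, (G * ((X : Polynomial A) • 1)).map (fun p => p.coeff (d+1))
      = G.map (fun p => p.coeff d) := by
    intro d; ext i j; simp [Matrix.map_apply, hX, coeff_mul_X]
  have claim0 : (G * ((X : Polynomial A) • 1)).map (fun p => p.coeff 0) = 0 := by
    ext i j; simp [Matrix.map_apply, hX, Polynomial.mul_coeff_zero]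
  have claim2 : ∀ d : ℕ, (G * (Matrix.of fun i j => C (E i j))).map (fun p => p.coeff d)
      = G.map (fun p => p.coeff d) * Matrix.of E := by
    intro d; ext i j
    simp only [Matrix.map_apply, Matrix.mul_apply, Matrix.of_apply]
    rw [Polynomial.finset_sum_coeff]
    apply Finset.sum_congr rfl
    intro k _
    rw [coeff_mul_C]
  simp only [hsplit, Matrix.sub_mul]
  rw [Finset.sum_sub_distrib]
  have e1 : ∑ d ∈ Finset.range (B+1),
      (G * ((X : Polynomial A) • 1)).map (fun p => p.coeff d) * (Matrix.of E)^d
      = ∑ d ∈ Finset.range B, G.map (fun p => p.coeff d) * (Matrix.of E)^(d+1) := by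
    rw [Finset.sum_range_succ']
    simp only [claim1, claim0, Matrix.zero_mul, add_zero]
  have e2 : ∑ d ∈ Finset.range (B+1),
      (G * (Matrix.of fun i j => C (E i j))).map (fun p => p.coeff d) * (Matrix.of E)^d
      = ∑ d ∈ Finset.range B, G.map (fun p => p.coeff d) * (Matrix.of E)^(d+1) := by
    rw [Finset.sum_range_succ]
    have hB : G.map (fun p => p.coeff B) = 0 := by
      ext i j; simp [Matrix.map_apply, hG]
    simp only [claim2, hB, Matrix.zero_mul, add_zero]
    apply Finset.sum_congr rfl
    intro d _
    rw [mul_assoc, ← pow_succ']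
  rw [e1, e2, sub_self]
end Psi

section MainAux
variable {R : Type*} [CommRing R] {A : Type*} [Ring A] [Algebra R A]

lemma natDegree_zsmul_le (z : ℤ) (p : Polynomial A) : (z • p).natDegree ≤ p.natDegree := by
  rw [Polynomial.natDegree_le_iff_coeff_eq_zero]
  intro m hm
  rw [Polynomial.coeff_smul, Polynomial.coeff_eq_zero_of_natDegree_lt hm, smul_zero]

end MainAux
end CayleyHamiltonAux


/-- Cayley–Hamilton for the quantum determinant. Let `E = (E_{ij})` be
the matrix of generators of `U_ℏ(gl_N)`, i.e. of any algebra with elements `E_{ij}`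
satisfying `[E_{ij}, E_{kl}] = ℏ(δ_{jk} E_{il} − δ_{li} E_{kj})`, and let
`A(u) = ∑_{i=0}^N A_i u^{N-i}` be the quantum determinant.  Then `A(E) = 0` as an
`N×N` matrix, i.e. `∑_{i=0}^N A_i E^{N-i} = 0` with `E^m` the matrix power. -/

theorem statement17 {R : Type*} [CommRing R] (hbar : R) {A : Type*} [Ring A]
    [Algebra R A] (N : ℕ) (E : Fin N → Fin N → A)
    (hE : ∀ i j k l, E i j * E k l - E k l * E i j =
      hbar • ((if j = k then E i l else 0) - (if l = i then E k j else 0))) :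
    ∑ i ∈ Finset.range (N + 1),
        (qdet hbar E).coeff (N - i) • (Matrix.of E : Matrix (Fin N) (Fin N) A) ^ (N - i)
      = 0 := by
  classical
  obtain _ | n := N
  · ext i j
    exact i.elim0
  -- the central scalar γ = N•(ℏ•1) − ℏ•1
  have hγc : ∀ z : A,
      ((n+1) • (hbar • (1:A)) - hbar • (1:A)) * z
        = z * ((n+1) • (hbar • (1:A)) - hbar • (1:A)) := by
    intro z
    have h1 := smul_one_central hbar (n+1) z
    have h2 := smul_one_central hbar 1 z
    simp only [one_smul] at h2
    rw [sub_mul, mul_sub, h1, h2]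
  have hcomm : ∀ a : A,
      Commute (C a) (C ((n+1) • (hbar • (1:A)) - hbar • (1:A)) - X) := by
    intro a
    apply Commute.sub_right
    · show _ * _ = _ * _
      rw [← map_mul, ← map_mul, hγc a]
    · exact (Polynomial.commute_X (C a)).symm
  set φ : Polynomial A →+* Polynomial A :=
    eval₂RingHom' C (C ((n+1) • (hbar • (1:A)) - hbar • (1:A)) - X) hcomm with hφdef
  have hφ_eq : ∀ p : Polynomial A,
      φ p = p.comp (C ((n+1) • (hbar • (1:A)) - hbar • (1:A)) - X) := fun p => rfl
  have hqm : qminor hbar E = QQ hbar E id := rfl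
  have hqd : qdet hbar E = ((-1:ℤ)^(n+1)) • φ (QQ hbar E id) := by
    rw [qdet, hqm, hφ_eq]
  -- matrices
  set Hm : Matrix (Fin (n+1)) (Fin (n+1)) (Polynomial A) :=
    Matrix.of fun i k => ((-1:ℤ)^(n - (i:ℕ))) •
      GG hbar E (⇑(rho (i:ℕ) (n - (i:ℕ)) : Equiv.Perm (Fin (n+1)))) k with hHm
  set Tm : Matrix (Fin (n+1)) (Fin (n+1)) (Polynomial A) :=
    Matrix.of fun k j => tt hbar E n k j with hTm
  have comat : Hm * Tm = QQ hbar E id • (1 : Matrix (Fin (n+1)) (Fin (n+1)) (Polynomial A)) := by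
    ext i j
    rw [Matrix.mul_apply, Matrix.smul_apply]
    have hin : (i:ℕ) + (n - (i:ℕ)) < n + 1 := by omega
    have htop : (rho (i:ℕ) (n - (i:ℕ)) : Equiv.Perm (Fin (n+1))) (Fin.last n) = i := by
      have h1 := rho_top (N := n+1) (n - (i:ℕ)) (i:ℕ) hin
      have e : (Fin.last n) = (⟨(i:ℕ) + (n - (i:ℕ)), hin⟩ : Fin (n+1)) := by
        simp [Fin.ext_iff]; omega
      rw [e, h1]
    set ρ := (rho (i:ℕ) (n - (i:ℕ)) : Equiv.Perm (Fin (n+1))) with hρ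
    set c0 : Fin (n+1) → Fin (n+1) := Function.update (⇑ρ) (Fin.last n) j with hc0
    have hGc : ∀ k, GG hbar E (⇑ρ) k = GG hbar E c0 k := by
      intro k
      apply GG_congr
      intro m
      rw [hc0, Function.update_of_ne (Fin.castSucc_lt_last m).ne]
    have hexp : QQ hbar E c0 = ∑ k, GG hbar E c0 k * tt hbar E n k j := by
      rw [QQ_expand]
      apply Finset.sum_congr rfl
      intro k _
      rw [hc0, Function.update_self]
    have hsum : ∑ k, Hm i k * Tm k j = ((-1:ℤ)^(n - (i:ℕ))) • QQ hbar E c0 := by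
      rw [hexp, Finset.smul_sum]
      apply Finset.sum_congr rfl
      intro k _
      rw [hHm, hTm]
      show (((-1:ℤ)^(n - (i:ℕ))) • GG hbar E (⇑ρ) k) * tt hbar E n k j
        = ((-1:ℤ)^(n - (i:ℕ))) • (GG hbar E c0 k * tt hbar E n k j)
      rw [smul_mul_assoc, hGc]
    rw [hsum]
    by_cases hij : i = j
    · subst hij
      have hc0ρ : c0 = ⇑ρ := by
        rw [hc0, ← htop]
        exact Function.update_eq_self _ _
      rw [hc0ρ, hρ, QQ_rho hbar E hE (n - (i:ℕ)) (i:ℕ) hin, smul_smul, ← pow_add,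
        Even.neg_one_pow ⟨n - (i:ℕ), rfl⟩, one_smul, Matrix.one_apply_eq, smul_eq_mul, mul_one]
    · have hQ0 : QQ hbar E c0 = 0 := by
        set m := ρ⁻¹ j with hm
        have hmlast : m ≠ Fin.last n := by
          intro h
          apply hij
          have : ρ m = j := by rw [hm]; simp
          rw [h, htop] at this
          exact this
        have hc0m : c0 m = j := by
          rw [hc0, Function.update_of_ne hmlast, hm]; simp
        have hc0l : c0 (Fin.last n) = j := Function.update_self _ _ _
        have hval : (m:ℕ) < n := Fin.val_lt_last hmlast
        exact QQ_noninj hbar E hE c0 m (Fin.last n)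
          (by simp only [Fin.val_last]; exact hval) (hc0m.trans hc0l.symm)
      rw [hQ0, smul_zero, Matrix.one_apply_ne hij, smul_zero]
  -- map the comatrix identity through φ
  have hφX : φ X = C ((n+1) • (hbar • (1:A)) - hbar • (1:A)) - X := eval₂_X C _
  have hφC : ∀ a : A, φ (C a) = C a := fun a => eval₂_C C _
  have hTmφ : Tm.map ⇑φ
      = (Matrix.of fun i j => C (E i j)) - (X : Polynomial A) •
          (1 : Matrix (Fin (n+1)) (Fin (n+1)) (Polynomial A)) := by
    refine Matrix.ext fun k j => ?_
    rw [Matrix.map_apply, hTm, Matrix.sub_apply, Matrix.smul_apply, Matrix.one_apply,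
      Matrix.of_apply, Matrix.of_apply]
    show φ (tt hbar E n k j) = C (E k j) - (X : Polynomial A) • if k = j then 1 else 0
    rw [tt]
    by_cases hkj : k = j
    · have hγ : ((n+1) • (hbar • (1:A)) - hbar • (1:A)) = n • (hbar • (1:A)) := by
        rw [succ_nsmul]; abel
      simp only [hkj, if_true, map_add, hφX, hφC, map_sub, smul_eq_mul, mul_one, hγ]
      abel
    · simp only [hkj, if_false, map_add, hφC, smul_eq_mul, mul_zero, sub_zero, map_zero,
        zero_add]
  -- mapped comatrix identity
  have comat2 : (Hm.map ⇑φ) * ((Matrix.of fun i j => C (E i j))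
        - (X : Polynomial A) • (1 : Matrix (Fin (n+1)) (Fin (n+1)) (Polynomial A)))
      = φ (QQ hbar E id) • (1 : Matrix (Fin (n+1)) (Fin (n+1)) (Polynomial A)) := by
    have h1 := congrArg (fun M : Matrix (Fin (n+1)) (Fin (n+1)) (Polynomial A) =>
      φ.mapMatrix M) comat
    simp only [map_mul, RingHom.mapMatrix_apply] at h1
    rw [hTmφ] at h1
    rw [h1]
    refine Matrix.ext fun a b => ?_
    rw [Matrix.map_apply, Matrix.smul_apply, Matrix.smul_apply, Matrix.one_apply]
    by_cases hab : a = b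
    · simp [hab, smul_eq_mul]
    · simp [hab, smul_eq_mul]
  -- the key factorization
  have main : (qdet hbar E) • (1 : Matrix (Fin (n+1)) (Fin (n+1)) (Polynomial A))
      = (-(((-1:ℤ)^(n+1)) • Hm.map ⇑φ)) *
        ((X : Polynomial A) • (1 : Matrix (Fin (n+1)) (Fin (n+1)) (Polynomial A))
          - Matrix.of fun i j => C (E i j)) := by
    rw [hqd, smul_assoc, ← comat2, Matrix.neg_mul, ← Matrix.mul_neg, neg_sub,
      Matrix.smul_mul]
  -- degree bound
  have hdeg : ∀ i j : Fin (n+1), (((-(((-1:ℤ)^(n+1)) • Hm.map ⇑φ))) i j).coeff (n+1) = 0 := by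
    intro i j
    have h0 : ((-(((-1:ℤ)^(n+1)) • Hm.map ⇑φ))) i j = -(((-1:ℤ)^(n+1)) • φ (Hm i j)) := by
      rw [Matrix.neg_apply, Matrix.smul_apply, Matrix.map_apply]
    rw [h0]
    have hGG : (Hm i j).natDegree ≤ n := by
      rw [hHm]
      simp only [Matrix.of_apply]
      refine (natDegree_zsmul_le _ _).trans ?_
      rw [GG]
      apply Polynomial.natDegree_sum_le_of_forall_le
      intro σ _
      refine (natDegree_zsmul_le _ _).trans ?_
      refine (Polynomial.natDegree_list_prod_le _).trans ?_
      have hb : ∀ y ∈ (List.ofFn fun m : Fin n =>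
          tt hbar E (m:ℕ) (σ m.castSucc) (((⇑(rho (i:ℕ) (n - (i:ℕ)))) : Fin (n+1) → Fin (n+1)) m.castSucc)).map natDegree,
          y ≤ 1 := by
        intro y hy
        simp only [List.mem_map, List.mem_ofFn] at hy
        obtain ⟨p, ⟨m, rfl⟩, rfl⟩ := hy
        unfold tt
        refine (natDegree_add_le _ _).trans ?_
        simp only [natDegree_C, le_refl, sup_le_iff]
        constructor
        · split_ifs
          · exact natDegree_X_le
          · simp
        · simp
      refine (List.sum_le_card_nsmul _ 1 hb).trans ?_
      simp [List.length_ofFn]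
    have hφdeg : (φ (Hm i j)).natDegree ≤ n := by
      rw [hφ_eq]
      refine natDegree_comp_le.trans ?_
      have h2 : (C ((n+1) • (hbar • (1:A)) - hbar • (1:A)) - X).natDegree ≤ 1 :=
        (natDegree_sub_le _ _).trans (by simp [natDegree_C, natDegree_X_le])
      calc (Hm i j).natDegree * (C ((n+1) • (hbar • (1:A)) - hbar • (1:A)) - X).natDegree
          ≤ n * 1 := Nat.mul_le_mul hGG h2
        _ = n := mul_one n
    have : (φ (Hm i j)).coeff (n+1) = 0 :=
      coeff_eq_zero_of_natDegree_lt (by omega)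
    rw [Polynomial.coeff_neg, Polynomial.coeff_smul, this, smul_zero, neg_zero]
  -- conclude by ψ
  have hpsi := psi_zero E (-(((-1:ℤ)^(n+1)) • Hm.map ⇑φ)) (n+1) hdeg
  rw [← main] at hpsi
  have hterm : ∀ d : ℕ,
      (((qdet hbar E) • (1 : Matrix (Fin (n+1)) (Fin (n+1)) (Polynomial A))).map
        (fun p => p.coeff d)) * (Matrix.of E)^d
      = (qdet hbar E).coeff d • (Matrix.of E)^d := by
    intro d
    have h1 : (((qdet hbar E) • (1 : Matrix (Fin (n+1)) (Fin (n+1)) (Polynomial A))).map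
        (fun p => p.coeff d)) = (qdet hbar E).coeff d • (1 : Matrix (Fin (n+1)) (Fin (n+1)) A) := by
      refine Matrix.ext fun a b => ?_
      rw [Matrix.map_apply, Matrix.smul_apply, Matrix.smul_apply, Matrix.one_apply,
        Matrix.one_apply]
      by_cases hab : a = b <;> simp [hab, smul_eq_mul]
    rw [h1, Matrix.smul_mul, Matrix.one_mul]
  calc ∑ i ∈ Finset.range (n + 1 + 1),
        (qdet hbar E).coeff (n + 1 - i) • (Matrix.of E : Matrix (Fin (n+1)) (Fin (n+1)) A) ^ (n + 1 - i)
      = ∑ d ∈ Finset.range (n + 1 + 1),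
          (qdet hbar E).coeff d • (Matrix.of E : Matrix (Fin (n+1)) (Fin (n+1)) A) ^ d := by
        have h2 := Finset.sum_range_reflect
          (fun d => (qdet hbar E).coeff d • (Matrix.of E : Matrix (Fin (n+1)) (Fin (n+1)) A) ^ d)
          (n+2)
        simpa using h2
    _ = ∑ d ∈ Finset.range (n + 1 + 1),
          (((qdet hbar E) • (1 : Matrix (Fin (n+1)) (Fin (n+1)) (Polynomial A))).map
            (fun p => p.coeff d)) * (Matrix.of E)^d := by
        exact Finset.sum_congr rfl fun d _ => (hterm d).symm
    _ = 0 := hpsi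
end

section
/- Let w_1,...,w_N be commuting variables, let U = ℂ[ℏ](w)^gen, and let v_1,...,v_N be elements with v_i v_j = v_j v_i and Pv_i P v_j P = Pv_i v_j P + δ_{j>i} ℏ(w_i−w_j)^{-1} Pv_j v_i P (the relations derived from the extremal projector P). Define v̄_i = ∏_{j>i}(w_i − w_j)·Pv_iP, elements of an algebra over U satisfying f(w)·v̄_i = v̄_i·f(w + ℏε_i). Then the v̄_i pairwise commute: v̄_i v̄_j = v̄_j v̄_i. -/
private lemma move_ofFn {B : Type*} [Ring B] :
    ∀ {N : ℕ} (f f' : Fin N → B) (q : B),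
      (∀ t, f t * q = q * f' t) →
      (List.ofFn f).prod * q = q * (List.ofFn f').prod := by
  intro N
  induction N with
  | zero => intro f f' q _; simp
  | succ n ih =>
      intro f f' q h
      rw [List.ofFn_succ, List.ofFn_succ, List.prod_cons, List.prod_cons,
        mul_assoc, ih (fun t => f t.succ) (fun t => f' t.succ) q (fun t => h t.succ),
        ← mul_assoc, h 0, mul_assoc]

private lemma extract_ofFn {B : Type*} [Ring B] :
    ∀ {N : ℕ} (f g : Fin N → B) (j : Fin N) (x y : B),
      (∀ t, t ≠ j → f t = g t) →
      (∀ t, Commute (f j) (f t)) →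
      (∀ t, Commute (g j) (g t)) →
      f j * x = g j * y →
      (List.ofFn f).prod * x = (List.ofFn g).prod * y := by
  intro N
  induction N with
  | zero => intro f g j; exact j.elim0
  | succ n ih =>
      intro f g j x y hfg hcf hcg hkey
      induction j using Fin.cases with
      | zero =>
          have htail : List.ofFn (fun t : Fin n => f t.succ) =
              List.ofFn (fun t : Fin n => g t.succ) := by
            exact congrArg List.ofFn (funext fun t => hfg t.succ (Fin.succ_ne_zero t))
          have hc1 : Commute (f 0) (List.ofFn fun t : Fin n => f t.succ).prod :=
            Commute.list_prod_right _ _ (by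
              intro z hz
              rw [List.mem_ofFn] at hz
              obtain ⟨t, rfl⟩ := hz
              exact hcf t.succ)
          have hc2 : Commute (g 0) (List.ofFn fun t : Fin n => g t.succ).prod :=
            Commute.list_prod_right _ _ (by
              intro z hz
              rw [List.mem_ofFn] at hz
              obtain ⟨t, rfl⟩ := hz
              exact hcg t.succ)
          rw [List.ofFn_succ, List.ofFn_succ, List.prod_cons, List.prod_cons,
            hc1.eq, hc2.eq, htail, mul_assoc, mul_assoc, hkey]
      | succ j' =>
          have h0 : f 0 = g 0 := hfg 0 (Fin.succ_ne_zero j').symm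
          rw [List.ofFn_succ, List.ofFn_succ, List.prod_cons, List.prod_cons,
            mul_assoc, mul_assoc, h0,
            ih (fun t => f t.succ) (fun t => g t.succ) j' x y
              (fun t ht => hfg t.succ (by simpa [Fin.succ_inj] using ht))
              (fun t => hcf t.succ) (fun t => hcg t.succ) hkey]

/-- Let `B` be a ring containing commuting elements `w_1,…,w_N` and a
central-ish parameter `ℏ`, with the differences `w_i − w_j` (for `i ≠ j`) invertible,
and elements `p_1,…,p_N` (the classes `P v_i P` produced by the extremal projector)
satisfying the Mickelsson-algebra relations
`f(w) p_i = p_i f(w + ℏ ε_i)` (on the generators `w_j`) and, for `i < j`,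
`p_i p_j = ((w_i − w_j + ℏ)/(w_i − w_j)) p_j p_i`.
Then the renormalized invariant vectors `v̄_i = ∏_{j>i} (w_i − w_j) · p_i` pairwise
commute: `v̄_i v̄_j = v̄_j v̄_i`. -/
theorem statement18 {B : Type*} [Ring B] (N : ℕ) (w : Fin N → B) (hbar : B)
    (p : Fin N → B)
    (hw : ∀ i j, Commute (w i) (w j))
    (hhw : ∀ i, Commute hbar (w i))
    (hhp : ∀ i, Commute hbar (p i))
    (hinv : ∀ i j, i ≠ j → IsUnit (w i - w j))
    (hshift : ∀ i j, w j * p i = p i * (w j + if j = i then hbar else 0))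
    (hrel : ∀ i j, i < j →
      (w i - w j) * (p i * p j) = (w i - w j + hbar) * (p j * p i)) :
    ∀ i j,
      ((List.ofFn fun t : Fin N => if i < t then w i - w t else 1).prod * p i) *
          ((List.ofFn fun t : Fin N => if j < t then w j - w t else 1).prod * p j) =
        ((List.ofFn fun t : Fin N => if j < t then w j - w t else 1).prod * p j) *
          ((List.ofFn fun t : Fin N => if i < t then w i - w t else 1).prod * p i) := by
  have main : ∀ i j : Fin N, i < j →
      ((List.ofFn fun t : Fin N => if i < t then w i - w t else 1).prod * p i) *
          ((List.ofFn fun t : Fin N => if j < t then w j - w t else 1).prod * p j) =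
        ((List.ofFn fun t : Fin N => if j < t then w j - w t else 1).prod * p j) *
          ((List.ofFn fun t : Fin N => if i < t then w i - w t else 1).prod * p i) := by
    intro i j hij
    set f : Fin N → B := fun t => if i < t then w i - w t else 1 with hf
    set g : Fin N → B :=
      fun t => if i < t then w i - w t + (if t = j then hbar else 0) else 1 with hg
    set h : Fin N → B := fun t => if j < t then w j - w t else 1 with hh
    have hwc : ∀ a b c d : Fin N, Commute (w a - w b) (w c - w d) := fun a b c d =>
      ((hw a c).sub_left (hw b c)).sub_right ((hw a d).sub_left (hw b d))
    have hwh : ∀ a b : Fin N, Commute (w a - w b) hbar := fun a b =>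
      ((hhw a).symm.sub_left (hhw b).symm)
    have hb1 : ∀ a b c d : Fin N, Commute (w a - w b + hbar) (w c - w d + hbar) :=
      fun a b c d => ((hwc a b c d).add_left (hwh c d).symm).add_right
        ((hwh a b).add_left (Commute.refl hbar))
    have hb2 : ∀ a b c d : Fin N, Commute (w a - w b + hbar) (w c - w d) :=
      fun a b c d => (hwc a b c d).add_left (hwh c d).symm
    -- moving p i past the P_j factors
    have A : (List.ofFn h).prod * p i = p i * (List.ofFn h).prod := by
      refine move_ofFn h h (p i) ?_
      intro t
      simp only [hh]
      split_ifs with hjt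
      · have h1 : w j * p i = p i * w j := by simpa [hij.ne'] using hshift i j
        have h2 : w t * p i = p i * w t := by
          simpa [(hij.trans hjt).ne'] using hshift i t
        rw [sub_mul, h1, h2, mul_sub]
      · simp
    -- moving p j past the (shifted) P_i factors
    have Bmv : (List.ofFn g).prod * p j = p j * (List.ofFn f).prod := by
      refine move_ofFn g f (p j) ?_
      intro t
      simp only [hg, hf]
      split_ifs with hit htj
      · rw [htj]
        have h1 : w i * p j = p j * w i := by simpa [hij.ne] using hshift j i
        have h2 : w j * p j = p j * (w j + hbar) := by simpa using hshift j j
        have h3 : hbar * p j = p j * hbar := (hhp j).eq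
        rw [add_mul, sub_mul, h1, h2, h3, mul_sub, mul_add]
        abel
      · have h1 : w i * p j = p j * w i := by simpa [hij.ne] using hshift j i
        have h2 : w t * p j = p j * w t := by simpa [htj] using hshift j t
        rw [add_zero, sub_mul, h1, h2, mul_sub]
      · simp
    -- Pf commutes with Ph
    have hPfPh : Commute (List.ofFn f).prod (List.ofFn h).prod := by
      refine Commute.list_prod_right _ _ ?_
      intro z hz
      rw [List.mem_ofFn] at hz
      obtain ⟨t, rfl⟩ := hz
      refine Commute.list_prod_left _ _ ?_
      intro z hz
      rw [List.mem_ofFn] at hz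
      obtain ⟨s, rfl⟩ := hz
      simp only [hf, hh]
      split_ifs
      · exact hwc _ _ _ _
      · exact Commute.one_right _
      · exact Commute.one_left _
      · exact Commute.one_left _
    -- the key extraction step
    have hkey : (List.ofFn f).prod * (p i * p j) =
        (List.ofFn g).prod * (p j * p i) := by
      refine extract_ofFn f g j (p i * p j) (p j * p i) ?_ ?_ ?_ ?_
      · intro t ht
        simp only [hf, hg, if_neg ht, add_zero]
      · intro t
        simp only [hf]
        split_ifs <;>
          first
            | exact hwc _ _ _ _
            | exact Commute.one_right _
            | exact Commute.one_left _
            | exact Commute.refl _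
      · intro t
        have hgj : g j = w i - w j + hbar := by simp [hg, hij]
        rw [hgj]
        by_cases hit : i < t
        · by_cases htj : t = j
          · subst htj
            rw [hgj]
          · simp only [hg, if_pos hit, if_neg htj, add_zero]
            exact hb2 i j i t
        · simp only [hg, if_neg hit]
          exact Commute.one_right _
      · have hfj : f j = w i - w j := by simp [hf, hij]
        have hgj : g j = w i - w j + hbar := by simp [hg, hij]
        rw [hfj, hgj]
        exact hrel i j hij
    -- chain everything together
    set Pf := (List.ofFn f).prod
    set Pg := (List.ofFn g).prod
    set Ph := (List.ofFn h).prod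
    calc Pf * p i * (Ph * p j)
        = Pf * ((p i * Ph) * p j) := by rw [mul_assoc, mul_assoc]
      _ = Pf * ((Ph * p i) * p j) := by rw [A]
      _ = Pf * Ph * (p i * p j) := by rw [mul_assoc (Ph) (p i) (p j), ← mul_assoc]
      _ = Ph * Pf * (p i * p j) := by rw [hPfPh.eq]
      _ = Ph * (Pg * (p j * p i)) := by rw [mul_assoc, hkey]
      _ = Ph * ((Pg * p j) * p i) := by rw [mul_assoc Pg (p j) (p i)]
      _ = Ph * ((p j * Pf) * p i) := by rw [Bmv]
      _ = Ph * p j * (Pf * p i) := by rw [mul_assoc (p j) Pf (p i), ← mul_assoc]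
  intro i j
  rcases lt_trichotomy i j with hij | rfl | hji
  · exact main i j hij
  · rfl
  · exact (main j i hji).symm
end

section
/- The GKLO assignment defines an algebra homomorphism into difference operators: setting X_+(u) = −∑_{i=1}^N (u−w_i)^{-1} ∏_{j≠i}(w_i−w_j)^{-1} u_i^{-1}, X_-(u) = ∑_{i=1}^N (u−w_i−ℏ)^{-1} ∏_{j≠i}(w_i−w_j)^{-1} u_i, D_1(u) = ∏_{i=1}^N (u−w_i), D_2(u) = ∏_{i=1}^N (u−w_i−ℏ)^{-1}, the relation (u−v)[X_+(u), X_-(v)] = ℏ(D_1(v)^{-1}D_2(v) − D_1(u)^{-1}D_2(u)) holds, where the brackets are commutators in the algebra of difference operators and both sides are expanded as power series in u^{-1}, v^{-1}. -/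
open MvPolynomial Finset

/-- The variables `w_1,…,w_N` together with `ℏ, u, v`. -/
abbrev DVar (N : ℕ) : Type := Fin N ⊕ Fin 3

/-- The field of rational functions in `w_1,…,w_N, ℏ, u, v` over `ℂ`, on which the
difference operators act. -/
abbrev DF (N : ℕ) : Type := FractionRing (MvPolynomial (DVar N) ℂ)

/-- The variable `w i`. -/
noncomputable def Wv {N : ℕ} (i : Fin N) : DF N :=
  algebraMap (MvPolynomial (DVar N) ℂ) (DF N) (X (Sum.inl i))

/-- The variable `ℏ`. -/
noncomputable def Hb {N : ℕ} : DF N :=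
  algebraMap (MvPolynomial (DVar N) ℂ) (DF N) (X (Sum.inr 0))

/-- The variable `u`. -/
noncomputable def Uv {N : ℕ} : DF N :=
  algebraMap (MvPolynomial (DVar N) ℂ) (DF N) (X (Sum.inr 1))

/-- The variable `v`. -/
noncomputable def Vvar {N : ℕ} : DF N :=
  algebraMap (MvPolynomial (DVar N) ℂ) (DF N) (X (Sum.inr 2))

/-- The substitution `w_i ↦ w_i + e·ℏ` on polynomials. -/
noncomputable def shiftHom (N : ℕ) (i : Fin N) (e : ℤ) :
    MvPolynomial (DVar N) ℂ →ₐ[ℂ] MvPolynomial (DVar N) ℂ :=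
  aeval fun x => X x + if x = Sum.inl i then e • X (Sum.inr 0) else 0

/-- The shift operator `u_i^{∓1}`, acting on rational functions by
`f(w) ↦ f(w_1,…,w_i + e·ℏ,…,w_N)`. -/
noncomputable def shiftF (N : ℕ) (i : Fin N) (e : ℤ) : DF N →+* DF N :=
  IsFractionRing.lift
    (g := (algebraMap (MvPolynomial (DVar N) ℂ) (DF N)).comp
            (shiftHom N i e).toRingHom)
    (by
      refine (IsFractionRing.injective (MvPolynomial (DVar N) ℂ) (DF N)).comp ?_
      have hcomp : (shiftHom N i (-e)).comp (shiftHom N i e) =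
          AlgHom.id ℂ (MvPolynomial (DVar N) ℂ) := by
        apply MvPolynomial.algHom_ext
        intro x
        by_cases hx : x = Sum.inl i <;>
          simp [shiftHom, hx, map_add, map_zsmul] <;> abel
      intro a b hab
      have := congrArg (shiftHom N i (-e)) hab
      calc a = (shiftHom N i (-e)).comp (shiftHom N i e) a := by rw [hcomp]; rfl
        _ = (shiftHom N i (-e)).comp (shiftHom N i e) b := this
        _ = b := by rw [hcomp]; rfl)

/-- The GKLO image of `x_+(u)`:
`X_+(u) = −∑_{i=1}^N (u − w_i)⁻¹ ∏_{j≠i} (w_i − w_j)⁻¹ · u_i^{-1}`,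
as an operator on rational functions parametrized by `P` (the spectral variable). -/
noncomputable def XpOp {N : ℕ} (P : DF N) (f : DF N) : DF N :=
  -∑ i : Fin N,
    ((P - Wv i)⁻¹ * ∏ j ∈ Finset.univ.erase i, (Wv i - Wv j)⁻¹) * shiftF N i (-1) f

/-- The GKLO image of `x_-(v)`:
`X_-(v) = ∑_{i=1}^N (v − w_i − ℏ)⁻¹ ∏_{j≠i} (w_i − w_j)⁻¹ · u_i`. -/
noncomputable def XmOp {N : ℕ} (P : DF N) (f : DF N) : DF N :=
  ∑ i : Fin N,
    ((P - Wv i - Hb)⁻¹ * ∏ j ∈ Finset.univ.erase i, (Wv i - Wv j)⁻¹) * shiftF N i 1 f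

/-! The commutator of `X_+(u)` and `X_-(v)` is a double sum over `(i, k)` of multiplication
operators composed with the shift `u_i⁻¹ u_k`. For `i ≠ k` the two coefficients agree, since
`(w_i - w_k)(w_k - w_i + ℏ) = (w_k - w_i)(w_i - w_k - ℏ)`, and for `i = k` the shifts cancel, so
`[X_+(u), X_-(v)]` is multiplication by a rational function. Multiplied by `u - v`, that function
is `ℏ` times the difference at `v` and at `u` of the partial-fraction expansion of
`∏ i, ((z - w_i)(z - w_i - ℏ))⁻¹` over the `2N` nodes `w_i` and `w_i + ℏ`. -/

theorem algebraMap_ne_of_aeval_ne {σ R : Type*} [CommRing R] {p q : MvPolynomial σ R}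
    (c : σ → R) (h : aeval c p ≠ aeval c q) :
    algebraMap _ (FractionRing (MvPolynomial σ R)) p ≠ algebraMap _ _ q := fun hpq =>
  h (by rw [IsFractionRing.injective _ _ hpq])

theorem Finset.univ_erase_inl {α β : Type*} [Fintype α] [Fintype β] [DecidableEq α]
    [DecidableEq β] (a : α) :
    (univ : Finset (α ⊕ β)).erase (.inl a) = (univ.erase a).disjSum univ := by
  ext (t | t) <;> simp

theorem Finset.univ_erase_inr {α β : Type*} [Fintype α] [Fintype β] [DecidableEq α]
    [DecidableEq β] (b : β) :
    (univ : Finset (α ⊕ β)).erase (.inr b) = univ.disjSum (univ.erase b) := by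
  ext (t | t) <;> simp

section DifferenceOperator

variable {R : Type*} [CommRing R] {ι : Type*} [Fintype ι]

def diffOp (A : ι → R) (σ : ι → R →+* R) (f : R) : R :=
  ∑ i, A i * σ i f

theorem diffOp_neg (A : ι → R) (σ : ι → R →+* R) (f : R) : diffOp A σ (-f) = -diffOp A σ f := by
  simp only [diffOp, map_neg, mul_neg, sum_neg_distrib]

theorem diffOp_diffOp_sub_diffOp_diffOp [DecidableEq ι] {A B : ι → R} {σ τ : ι → R →+* R}
    (hcomm : ∀ i k f, τ k (σ i f) = σ i (τ k f)) (hinv : ∀ i f, σ i (τ i f) = f)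
    (hAB : ∀ i k, i ≠ k → A i * σ i (B k) = B k * τ k (A i)) (f : R) :
    diffOp A σ (diffOp B τ f) - diffOp B τ (diffOp A σ f) =
      (∑ i, (A i * σ i (B i) - B i * τ i (A i))) * f := by
  have hdiag : ∀ i, ∑ k, (A i * σ i (B k) - B k * τ k (A i)) * σ i (τ k f) =
      (A i * σ i (B i) - B i * τ i (A i)) * f := fun i => by
    rw [Fintype.sum_eq_single i fun k hk => by rw [hAB i k hk.symm, sub_self, zero_mul], hinv]
  calc _ = ∑ i, ∑ k, (A i * σ i (B k) - B k * τ k (A i)) * σ i (τ k f) := by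
        simp only [diffOp, map_sum, map_mul, mul_sum, hcomm, sub_mul, sum_sub_distrib]
        rw [sum_comm (f := fun k i => B k * (τ k (A i) * σ i (τ k f)))]
        simp only [mul_assoc]
    _ = _ := by simp only [hdiag, sum_mul]

end DifferenceOperator

namespace Lagrange

variable {F : Type*} [Field F] {ι : Type*} [DecidableEq ι]

theorem map_nodalWeight {K : Type*} [Field K] (φ : F →+* K) (s : Finset ι) (v : ι → F) (i : ι) :
    φ (nodalWeight s v i) = nodalWeight s (φ ∘ v) i := by
  simp only [nodalWeight, map_prod, map_inv₀, map_sub, Function.comp_apply]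

theorem nodalWeight_update_self (s : Finset ι) (v : ι → F) (i : ι) (x : F) :
    nodalWeight s (Function.update v i x) i = ∏ j ∈ s.erase i, (x - v j)⁻¹ :=
  prod_congr rfl fun j hj => by
    rw [Function.update_self, Function.update_of_ne (ne_of_mem_erase hj)]

theorem nodalWeight_update_of_ne {s : Finset ι} (v : ι → F) {i k : ι} (hi : i ∈ s) (hik : i ≠ k)
    (x : F) :
    nodalWeight s (Function.update v i x) k =
      (v k - x)⁻¹ * ∏ j ∈ (s.erase k).erase i, (v k - v j)⁻¹ := by
  rw [nodalWeight, ← mul_prod_erase _ _ (mem_erase.2 ⟨hik, hi⟩), Function.update_self,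
    Function.update_of_ne hik.symm]
  congr 1
  refine prod_congr rfl fun j hj => ?_
  rw [Function.update_of_ne (ne_of_mem_erase hj)]

theorem nodalWeight_mul_nodalWeight_update_comm {s : Finset ι} (v : ι → F) {i k : ι}
    (hi : i ∈ s) (hk : k ∈ s) (hik : i ≠ k) (h : F) :
    nodalWeight s v i * nodalWeight s (Function.update v i (v i - h)) k =
      nodalWeight s v k * nodalWeight s (Function.update v k (v k + h)) i := by
  rw [nodalWeight_update_of_ne v hi hik, nodalWeight_update_of_ne v hk hik.symm, nodalWeight,
    nodalWeight, ← mul_prod_erase _ _ (mem_erase.2 ⟨hik.symm, hk⟩),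
    ← mul_prod_erase (s.erase k) _ (mem_erase.2 ⟨hik, hi⟩),
    show v k - v i = -(v i - v k) by ring, show v i - (v k + h) = -(v k - (v i - h)) by ring,
    inv_neg, inv_neg, erase_right_comm]
  ring

/-- Taking the difference of two evaluation points makes this partial-fraction identity hold
also for `s = ∅`. -/
theorem sum_nodalWeight_mul_inv_sub_sub_inv_sub {s : Finset ι} {v : ι → F} (hvs : Set.InjOn v s)
    {x y : F} (hx : ∀ i ∈ s, x ≠ v i) (hy : ∀ i ∈ s, y ≠ v i) :
    ∑ i ∈ s, nodalWeight s v i * ((x - v i)⁻¹ - (y - v i)⁻¹) =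
      (∏ i ∈ s, (x - v i))⁻¹ - (∏ i ∈ s, (y - v i))⁻¹ := by
  rcases s.eq_empty_or_nonempty with rfl | hs
  · simp
  have key : ∀ z, (∀ i ∈ s, z ≠ v i) →
      ∑ i ∈ s, nodalWeight s v i * (z - v i)⁻¹ = (∏ i ∈ s, (z - v i))⁻¹ := fun z hz =>
    eq_inv_of_mul_eq_one_right <| by
      simpa [interpolate_one hvs hs, eval_nodal] using (eval_interpolate_not_at_node 1 hz).symm
  simp only [mul_sub, sum_sub_distrib, key x hx, key y hy]

variable [Fintype ι]

theorem nodalWeight_sumElim_inl (v : ι → F) (h : F) (i : ι) :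
    nodalWeight univ (Sum.elim v fun j => v j + h) (.inl i) =
      -h⁻¹ * (nodalWeight univ v i * ∏ j ∈ univ.erase i, (v i - h - v j)⁻¹) := by
  rw [nodalWeight, univ_erase_inl, prod_disjSum, ← mul_prod_erase univ _ (mem_univ i)]
  simp only [Sum.elim_inl, Sum.elim_inr, nodalWeight, show v i - (v i + h) = -h by ring, inv_neg]
  rw [← mul_assoc, mul_comm _ (-h⁻¹), mul_assoc]
  congr 2
  exact prod_congr rfl fun j _ => by rw [sub_add_eq_sub_sub, sub_right_comm]

theorem nodalWeight_sumElim_inr (v : ι → F) (h : F) (i : ι) :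
    nodalWeight univ (Sum.elim v fun j => v j + h) (.inr i) =
      h⁻¹ * (nodalWeight univ v i * ∏ j ∈ univ.erase i, (v i + h - v j)⁻¹) := by
  rw [nodalWeight, univ_erase_inr, prod_disjSum, ← mul_prod_erase univ _ (mem_univ i)]
  simp only [Sum.elim_inl, Sum.elim_inr, nodalWeight, add_sub_cancel_left,
    add_sub_add_right_eq_sub]
  ring

theorem sum_sub_mul_diagonal_eq {v : ι → F} {h : F} (hv : Function.Injective v)
    (hvh : ∀ i j, v i ≠ v j + h) {x y : F} (hx : ∀ i, x ≠ v i) (hxh : ∀ i, x ≠ v i + h)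
    (hy : ∀ i, y ≠ v i) (hyh : ∀ i, y ≠ v i + h) :
    ∑ i, (x - y) *
        ((x - v i)⁻¹ * (y - v i)⁻¹ *
            (nodalWeight univ v i * ∏ j ∈ univ.erase i, (v i - h - v j)⁻¹) -
          (x - v i - h)⁻¹ * (y - v i - h)⁻¹ *
            (nodalWeight univ v i * ∏ j ∈ univ.erase i, (v i + h - v j)⁻¹)) =
      h * ((∏ i, ((x - v i) * (x - v i - h)))⁻¹ - (∏ i, ((y - v i) * (y - v i - h)))⁻¹) := by
  set a : ι ⊕ ι → F := Sum.elim v fun j => v j + h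
  have ha : Set.InjOn a (univ : Finset (ι ⊕ ι)) := by
    rintro (i | i) - (j | j) - hij
    all_goals simp only [a, Sum.elim_inl, Sum.elim_inr, add_left_inj] at hij
    exacts [congrArg _ (hv hij), absurd hij (hvh i j), absurd hij.symm (hvh j i),
      congrArg _ (hv hij)]
  have hxa : ∀ t ∈ univ, x ≠ a t := by rintro (i | i) - <;> simp [a, hx, hxh]
  have hya : ∀ t ∈ univ, y ≠ a t := by rintro (i | i) - <;> simp [a, hy, hyh]
  have hprod : ∀ z, ∏ i, ((z - v i) * (z - v i - h)) = ∏ t, (z - a t) := fun z => by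
    simp only [Fintype.prod_sum_type, prod_mul_distrib, a, Sum.elim_inl, Sum.elim_inr, sub_sub]
  rw [hprod, hprod, ← sum_nodalWeight_mul_inv_sub_sub_inv_sub ha hxa hya,
    Fintype.sum_sum_type, ← sum_add_distrib, mul_sum]
  refine sum_congr rfl fun i _ => ?_
  have hh : h ≠ 0 := fun h0 => hvh i i (by rw [h0, add_zero])
  have hxi := sub_ne_zero.2 (hx i)
  have hyi := sub_ne_zero.2 (hy i)
  have hxhi := sub_ne_zero.2 (hxh i)
  have hyhi := sub_ne_zero.2 (hyh i)
  simp only [nodalWeight_sumElim_inl, nodalWeight_sumElim_inr, a, Sum.elim_inl, Sum.elim_inr,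
    sub_sub]
  field_simp
  ring

end Lagrange

section GKLO

open Lagrange

variable {N : ℕ}

theorem Wv_injective : Function.Injective (Wv : Fin N → DF N) := fun _ _ h =>
  Sum.inl_injective (X_injective (IsFractionRing.injective _ (DF N) h))

theorem Wv_ne_Wv_add_Hb (i j : Fin N) : (Wv i : DF N) ≠ Wv j + Hb := by
  rw [Wv, Wv, Hb, ← map_add]
  exact algebraMap_ne_of_aeval_ne (Pi.single (.inr 0) 1) (by simp)

theorem Uv_ne_Wv (i : Fin N) : (Uv : DF N) ≠ Wv i :=
  algebraMap_ne_of_aeval_ne (Pi.single (.inr 1) 1) (by simp)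

theorem Uv_ne_Wv_add_Hb (i : Fin N) : (Uv : DF N) ≠ Wv i + Hb := by
  rw [Wv, Hb, ← map_add]
  exact algebraMap_ne_of_aeval_ne (Pi.single (.inr 1) 1) (by simp)

theorem Vvar_ne_Wv (i : Fin N) : (Vvar : DF N) ≠ Wv i :=
  algebraMap_ne_of_aeval_ne (Pi.single (.inr 2) 1) (by simp)

theorem Vvar_ne_Wv_add_Hb (i : Fin N) : (Vvar : DF N) ≠ Wv i + Hb := by
  rw [Wv, Hb, ← map_add]
  exact algebraMap_ne_of_aeval_ne (Pi.single (.inr 2) 1) (by simp)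

theorem shiftF_algebraMap (i : Fin N) (e : ℤ) (p : MvPolynomial (DVar N) ℂ) :
    shiftF N i e (algebraMap _ _ p) = algebraMap _ _ (shiftHom N i e p) :=
  IsFractionRing.lift_algebraMap _ _

theorem shiftHom_X (i : Fin N) (e : ℤ) (x : DVar N) :
    shiftHom N i e (X x) = X x + if x = .inl i then e • X (.inr 0) else 0 :=
  aeval_X _ _

theorem shiftHom_X_inr (i : Fin N) (e : ℤ) (t : Fin 3) :
    shiftHom N i e (X (.inr t)) = X (.inr t) := by
  rw [shiftHom_X, if_neg Sum.inr_ne_inl, add_zero]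

theorem shiftF_X_inr (i : Fin N) (e : ℤ) (t : Fin 3) :
    shiftF N i e (algebraMap _ _ (X (.inr t) : MvPolynomial (DVar N) ℂ)) =
      algebraMap (MvPolynomial (DVar N) ℂ) (DF N) (X (.inr t)) := by
  rw [shiftF_algebraMap, shiftHom_X_inr]

theorem shiftF_Hb (i : Fin N) (e : ℤ) : shiftF N i e Hb = Hb := shiftF_X_inr i e 0

theorem shiftF_Uv (i : Fin N) (e : ℤ) : shiftF N i e Uv = Uv := shiftF_X_inr i e 1

theorem shiftF_Vvar (i : Fin N) (e : ℤ) : shiftF N i e Vvar = Vvar := shiftF_X_inr i e 2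

theorem shiftF_comp_Wv (i : Fin N) (e : ℤ) :
    shiftF N i e ∘ Wv = Function.update Wv i (Wv i + (e : DF N) * Hb) := by
  ext j
  rw [Function.comp_apply, Wv, shiftF_algebraMap, shiftHom_X]
  rcases eq_or_ne j i with rfl | hji
  · rw [if_pos rfl, Function.update_self, map_add, zsmul_eq_mul, map_mul, map_intCast]
    rfl
  · rw [if_neg (by simpa using hji), Function.update_of_ne hji, add_zero]
    rfl

theorem shiftF_Wv (i j : Fin N) (e : ℤ) :
    shiftF N i e (Wv j) = Function.update Wv i (Wv i + (e : DF N) * Hb) j :=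
  congrFun (shiftF_comp_Wv i e) j

theorem shiftHom_comp_shiftHom (i k : Fin N) (e e' : ℤ) :
    (shiftHom N i e).comp (shiftHom N k e') = (shiftHom N k e').comp (shiftHom N i e) := by
  refine algHom_ext fun x => ?_
  by_cases hi : x = .inl i <;> by_cases hk : x = .inl k <;>
    simp [shiftHom_X, hi, hk, apply_ite (shiftHom _ _ _)] <;> abel

theorem shiftHom_neg_comp_shiftHom (i : Fin N) (e : ℤ) :
    (shiftHom N i (-e)).comp (shiftHom N i e) = AlgHom.id ℂ _ := by
  refine algHom_ext fun x => ?_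
  by_cases hi : x = .inl i <;> simp [shiftHom_X, hi]

theorem shiftF_nodalWeight (i j : Fin N) (e : ℤ) :
    shiftF N i e (nodalWeight univ Wv j) =
      nodalWeight univ (Function.update Wv i (Wv i + (e : DF N) * Hb)) j := by
  rw [map_nodalWeight, shiftF_comp_Wv]

theorem shiftF_shiftF (i k : Fin N) (e e' : ℤ) (f : DF N) :
    shiftF N i e (shiftF N k e' f) = shiftF N k e' (shiftF N i e f) := by
  suffices (shiftF N i e).comp (shiftF N k e') = (shiftF N k e').comp (shiftF N i e) from
    RingHom.congr_fun this f
  refine IsLocalization.ringHom_ext (nonZeroDivisors (MvPolynomial (DVar N) ℂ))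
    (RingHom.ext fun p => ?_)
  rw [RingHom.comp_apply, RingHom.comp_apply, RingHom.comp_apply, RingHom.comp_apply,
    shiftF_algebraMap, shiftF_algebraMap, shiftF_algebraMap, shiftF_algebraMap,
    ← AlgHom.comp_apply, shiftHom_comp_shiftHom, AlgHom.comp_apply]

theorem shiftF_neg_shiftF (i : Fin N) (e : ℤ) (f : DF N) :
    shiftF N i (-e) (shiftF N i e f) = f := by
  suffices (shiftF N i (-e)).comp (shiftF N i e) = RingHom.id _ from RingHom.congr_fun this f
  refine IsLocalization.ringHom_ext (nonZeroDivisors (MvPolynomial (DVar N) ℂ))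
    (RingHom.ext fun p => ?_)
  rw [RingHom.comp_apply, RingHom.comp_apply, shiftF_algebraMap, shiftF_algebraMap,
    ← AlgHom.comp_apply, shiftHom_neg_comp_shiftHom, AlgHom.id_apply, RingHom.id_comp]

theorem XpOp_eq_neg_diffOp (P f : DF N) :
    XpOp P f = -diffOp (fun i => (P - Wv i)⁻¹ * nodalWeight univ Wv i)
      (fun i => shiftF N i (-1)) f := rfl

theorem XmOp_eq_diffOp (P f : DF N) :
    XmOp P f = diffOp (fun i => (P - Wv i - Hb)⁻¹ * nodalWeight univ Wv i)
      (fun i => shiftF N i 1) f := rfl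

theorem gklo_offDiagonal_comm {i k : Fin N} (hik : i ≠ k) :
    (Uv - Wv i)⁻¹ * nodalWeight univ Wv i *
        shiftF N i (-1) ((Vvar - Wv k - Hb)⁻¹ * nodalWeight univ Wv k) =
      (Vvar - Wv k - Hb)⁻¹ * nodalWeight univ Wv k *
        shiftF N k 1 ((Uv - Wv i)⁻¹ * nodalWeight univ Wv i) := by
  have key := nodalWeight_mul_nodalWeight_update_comm Wv (mem_univ i) (mem_univ k) hik Hb
  simp only [map_mul, map_inv₀, map_sub, shiftF_Uv, shiftF_Vvar, shiftF_Hb, shiftF_Wv,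
    shiftF_nodalWeight, Function.update_of_ne hik, Function.update_of_ne hik.symm, Int.cast_neg,
    Int.cast_one, neg_one_mul, ← sub_eq_add_neg, one_mul]
  linear_combination (Uv - Wv i)⁻¹ * (Vvar - Wv k - Hb)⁻¹ * key

theorem gklo_diagonal_eq (i : Fin N) :
    (Uv - Wv i)⁻¹ * nodalWeight univ Wv i *
        shiftF N i (-1) ((Vvar - Wv i - Hb)⁻¹ * nodalWeight univ Wv i) -
      (Vvar - Wv i - Hb)⁻¹ * nodalWeight univ Wv i *
        shiftF N i 1 ((Uv - Wv i)⁻¹ * nodalWeight univ Wv i) =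
      (Uv - Wv i)⁻¹ * (Vvar - Wv i)⁻¹ *
          (nodalWeight univ Wv i * ∏ j ∈ univ.erase i, (Wv i - Hb - Wv j)⁻¹) -
        (Uv - Wv i - Hb)⁻¹ * (Vvar - Wv i - Hb)⁻¹ *
          (nodalWeight univ Wv i * ∏ j ∈ univ.erase i, (Wv i + Hb - Wv j)⁻¹) := by
  simp only [map_mul, map_inv₀, map_sub, shiftF_Uv, shiftF_Vvar, shiftF_Hb, shiftF_Wv,
    shiftF_nodalWeight, Function.update_self, nodalWeight_update_self, Int.cast_neg,
    Int.cast_one, neg_one_mul, ← sub_eq_add_neg, one_mul]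
  ring

end GKLO

/-- The GKLO assignment defines an algebra homomorphism into
difference operators: with `X_+(u), X_-(v)` as above and
`D_1(u) = ∏_i (u − w_i)`, `D_2(u) = ∏_i (u − w_i − ℏ)⁻¹`, the shifted-Yangian relation
`(u − v)[X_+(u), X_-(v)] = ℏ (D_1(v)⁻¹ D_2(v) − D_1(u)⁻¹ D_2(u))`
holds as an identity of operators on the field of rational functions in
`w_1,…,w_N, ℏ, u, v`. -/
theorem statement19 (N : ℕ) (f : DF N) :
    (Uv - Vvar) * (XpOp Uv (XmOp Vvar f) - XmOp Vvar (XpOp Uv f)) =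
      Hb * ((∏ i : Fin N, ((Vvar - Wv i) * (Vvar - Wv i - Hb)))⁻¹ -
          (∏ i : Fin N, ((Uv - Wv i) * (Uv - Wv i - Hb)))⁻¹) * f := by
  have hcomm := diffOp_diffOp_sub_diffOp_diffOp
    (fun i k g => shiftF_shiftF k i 1 (-1) g) (fun i g => shiftF_neg_shiftF i 1 g)
    (fun i k hik => gklo_offDiagonal_comm hik) f
  have hsum := Lagrange.sum_sub_mul_diagonal_eq (Wv_injective (N := N)) Wv_ne_Wv_add_Hb Uv_ne_Wv
    Uv_ne_Wv_add_Hb Vvar_ne_Wv Vvar_ne_Wv_add_Hb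
  rw [sum_congr rfl fun i _ => gklo_diagonal_eq i] at hcomm
  rw [← mul_sum] at hsum
  rw [XpOp_eq_neg_diffOp, XmOp_eq_diffOp, XmOp_eq_diffOp, XpOp_eq_neg_diffOp, diffOp_neg]
  linear_combination (Vvar - Uv) * hcomm - f * hsum
end
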